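/- arXiv:1312.0320 — 4 statements merged into one kernel-verified Lean document; each statement's English description precedes it below -/
import Mathlib

section
/- Let Γ be a quiver of mutation type A_n with vertex set Γ₀. Then there exists a bijective labelling ℓ : Γ₀ → {1, …, n} such that: (i) every vertex is the vertex of smallest label of at most one oriented 3-cycle of Γ; and (ii) the set {β_1, …, β_n} ⊆ Φ defined by β_i = α_i + α_{i+1} + ⋯ + α_j whenever i is the smallest label and j the second-smallest label of the three vertices of an oriented 3-cycle of Γ, and β_i = α_i otherwise, is a companion basis for Γ (the element β_{ℓ(x)} being associated to the vertex x). -/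
open scoped BigOperators

/-- Fomin–Zelevinsky mutation of a skew-symmetric integer matrix (quiver) at a vertex `k`. -/
def mutQ {V : Type*} [DecidableEq V] (B : V → V → ℤ) (k : V) : V → V → ℤ :=
  fun x y => if x = k ∨ y = k then -B x y
    else B x y + Int.sign (B x k) * max (B x k * B k y) 0

/-- Iterated mutation along a list of vertices (first entry mutated first). -/
def mutSeq {V : Type*} [DecidableEq V] (B : V → V → ℤ) (l : List V) : V → V → ℤ :=
  l.foldl mutQ B

/-- `O` is (the exchange matrix of) an orientation of the Dynkin diagram `A_n`,
with vertices `0, …, n-1` (0-based) along the path. -/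
def IsOrientationA {n : ℕ} (O : Fin n → Fin n → ℤ) : Prop :=
  (∀ x y, O y x = -O x y) ∧
  ∀ x y : Fin n, (O x y).natAbs = if x.val + 1 = y.val ∨ y.val + 1 = x.val then 1 else 0

/-- The quiver (skew-symmetric matrix) `B` is of mutation type `A_n`: it is obtained
from some orientation of the Dynkin diagram `A_n` by a finite sequence of mutations. -/
def IsMutTypeA {V : Type*} [DecidableEq V] (n : ℕ) (B : V → V → ℤ) : Prop :=
  ∃ (e : V ≃ Fin n) (O : Fin n → Fin n → ℤ) (l : List (Fin n)),
    IsOrientationA O ∧ ∀ x y, B x y = mutSeq O l (e x) (e y)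

/-- The standard inner product. -/
def ip {m : ℕ} (x y : Fin m → ℝ) : ℝ := ∑ k, x k * y k

/-- `eVec m i` is the `i`-th standard basis vector of `ℝ^m` (1-based: `1 ≤ i ≤ m`). -/
def eVec (m : ℕ) (i : ℕ) : Fin m → ℝ := fun k => if k.val + 1 = i then 1 else 0

/-- The root system of type `A_n`, realized in `ℝ^{n+1}` as `{e_i - e_j : i ≠ j}`. -/
def PhiA (n : ℕ) : Set (Fin (n + 1) → ℝ) :=
  {v | ∃ i j : ℕ, 1 ≤ i ∧ i ≤ n + 1 ∧ 1 ≤ j ∧ j ≤ n + 1 ∧ i ≠ j ∧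
        v = eVec (n + 1) i - eVec (n + 1) j}

/-- The simple root `α_i = e_i − e_{i+1}` of type `A_n` (1-based: `1 ≤ i ≤ n`). -/
def alA (n : ℕ) (i : ℕ) : Fin (n + 1) → ℝ := eVec (n + 1) i - eVec (n + 1) (i + 1)

/-- A companion basis for the quiver `B` with respect to the type `A_n` root system:
a family of roots forming a ℤ-basis of the root lattice `ℤΦ` whose pairwise inner
products match, in absolute value, the edge multiplicities of the quiver. -/
def IsCompanionBasisA {V : Type*} (n : ℕ) (B : V → V → ℤ)
    (γ : V → (Fin (n + 1) → ℝ)) : Prop :=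
  (∀ x, γ x ∈ PhiA n) ∧ LinearIndependent ℤ γ ∧
  Submodule.span ℤ (Set.range γ) = Submodule.span ℤ (PhiA n) ∧
  ∀ x y, x ≠ y → |ip (γ x) (γ y)| = ((B x y).natAbs : ℝ)

/-- The valency of a vertex: the number of edges at it in the underlying graph. -/
def valency {V : Type*} [Fintype V] (B : V → V → ℤ) (x : V) : ℕ := ∑ y, (B x y).natAbs

/-- `x, y, z` form an oriented 3-cycle `x → y → z → x` of the quiver `B`. -/
def Cyc3 {V : Type*} (B : V → V → ℤ) (x y z : V) : Prop :=
  0 < B x y ∧ 0 < B y z ∧ 0 < B z x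

/-- An end vertex: a vertex of valency 0, of valency 1, or of valency 2 lying on an
oriented 3-cycle. -/
def IsEndVertex {V : Type*} [Fintype V] (B : V → V → ℤ) (x : V) : Prop :=
  valency B x = 0 ∨ valency B x = 1 ∨ (valency B x = 2 ∧ ∃ y z, Cyc3 B x y z)

open Finset

/-!
A quiver of mutation type `A_n` is a "line graph" of a tree: its vertices are the `n` edges of a
tree on `n + 1` points, two vertices are joined by one arrow iff their edges meet, and the three
edges at a point of degree three form an oriented 3-cycle. For an orientation of `A_n` the tree is
a path. Mutation at `k` slides every edge with an arrow into `k` along `k`, from one end of `k` to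
the other; this adds to the vector `e_u - e_v` of each sliding edge a multiple of the vector of
`k`, so the vectors stay linearly independent and the edges still form a tree.

Root the tree at a leaf and label its points by a preorder traversal counting down from `n`; label
an edge by its lower end. The edge `x` with ends labelled `i < j` gets the root `e_{i+1} - e_{j+1}`.
These roots are unitriangular in the simple roots, hence a basis of the root lattice, and
`|(β_x, β_y)|` is `1` iff the edges meet. By the preorder, `j = i + 1` unless the upper end of `x`
has a second child, labelled `j - 1`; then `x`, that child and the edge above form the oriented
3-cycle whose smallest label is `i` and whose second smallest is `j - 1`.
-/

/-! ### Tree models -/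

section TreeModel

variable {V P : Type*}

def IsEnd (a b : V → P) (x : V) (v : P) : Prop := v = a x ∨ v = b x

instance [DecidableEq P] (a b : V → P) (x : V) (v : P) : Decidable (IsEnd a b x v) :=
  inferInstanceAs (Decidable (_ ∨ _))

def Meets (a b : V → P) (x y : V) : Prop := ∃ v, IsEnd a b x v ∧ IsEnd a b y v

instance [DecidableEq P] [Fintype P] (a b : V → P) (x y : V) : Decidable (Meets a b x y) := by
  unfold Meets; infer_instance

def IsCyclic3 (B : V → V → ℤ) (x y z : V) : Prop := Cyc3 B x y z ∨ Cyc3 B x z y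

lemma isEnd_left (a b : V → P) (x : V) : IsEnd a b x (a x) := Or.inl rfl

lemma isEnd_right (a b : V → P) (x : V) : IsEnd a b x (b x) := Or.inr rfl

lemma Meets.symm {a b : V → P} {x y : V} (h : Meets a b x y) : Meets a b y x :=
  let ⟨v, hx, hy⟩ := h; ⟨v, hy, hx⟩

lemma meets_comm {a b : V → P} {x y : V} : Meets a b x y ↔ Meets a b y x :=
  ⟨Meets.symm, Meets.symm⟩

lemma IsCyclic3.rotate {B : V → V → ℤ} {x y z : V} (h : IsCyclic3 B x y z) :
    IsCyclic3 B y z x := by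
  unfold IsCyclic3 Cyc3 at h ⊢; tauto

lemma false_of_three_isCyclic3 {B : V → V → ℤ} (hskew : ∀ x y, B y x = -B x y) {x y z t : V}
    (hxyt : IsCyclic3 B x y t) (hxzt : IsCyclic3 B x z t) (hyzt : IsCyclic3 B y z t) :
    False := by
  -- `t` would have exactly one out-neighbour in each of the three pairs from `x, y, z`
  have := hskew x y; have := hskew x z; have := hskew x t
  have := hskew y z; have := hskew y t; have := hskew z t
  unfold IsCyclic3 Cyc3 at hxyt hxzt hyzt
  omega

variable [DecidableEq P] {a b : V → P}

def edgeVec (a b : V → P) (x : V) : P → ℤ := Pi.single (a x) 1 - Pi.single (b x) 1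

lemma exists_smul_edgeVec_eq {x : V} {p q : P} (hp : IsEnd a b x p) (hq : IsEnd a b x q)
    (hpq : p ≠ q) :
    ∃ ε : ℤ, ε ≠ 0 ∧ ε • edgeVec a b x = Pi.single p 1 - Pi.single q 1 := by
  rcases hp with rfl | rfl <;> rcases hq with rfl | rfl
  · exact absurd rfl hpq
  · exact ⟨1, one_ne_zero, one_smul _ _⟩
  · exact ⟨-1, by norm_num, by simp [edgeVec]⟩
  · exact absurd rfl hpq

lemma smul_eq_zero_of_linearIndependent_two (h : LinearIndependent ℤ (edgeVec a b)) {x y : V}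
    (hxy : x ≠ y) {s t : ℤ} (hst : s • edgeVec a b x + t • edgeVec a b y = 0) : s = 0 := by
  have := Fintype.linearIndependent_iff.1 (h.comp ![x, y] ?_) ![s, t]
    (by simpa [Fin.sum_univ_two] using hst) 0
  · simpa using this
  · simp [Function.Injective, Fin.forall_fin_succ, hxy, hxy.symm]

lemma smul_eq_zero_of_linearIndependent_three (h : LinearIndependent ℤ (edgeVec a b))
    {x y z : V} (hxy : x ≠ y) (hxz : x ≠ z) (hyz : y ≠ z) {s t u : ℤ}
    (hstu : s • edgeVec a b x + t • edgeVec a b y + u • edgeVec a b z = 0) : s = 0 := by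
  have := Fintype.linearIndependent_iff.1 (h.comp ![x, y, z] ?_) ![s, t, u]
    (by simpa [Fin.sum_univ_three] using hstu) 0
  · simpa using this
  · simp [Function.Injective, Fin.forall_fin_succ, hxy, hxz, hyz, hxy.symm, hxz.symm, hyz.symm]

/-- The vertex `x` of the quiver `B` is the edge joining `a x` and `b x` of a tree on `P`; the
linear independence of the vectors `e_{a x} - e_{b x}` says that the edges form no cycle. -/
structure IsTreeModel [Fintype P] (B : V → V → ℤ) (a b : V → P) : Prop where
  linearIndependent : LinearIndependent ℤ (edgeVec a b)
  natAbs_eq : ∀ x y, x ≠ y → (B x y).natAbs = if Meets a b x y then 1 else 0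
  skew : ∀ x y, B y x = -B x y
  connected : ∀ S : Finset P, S.Nonempty → S ≠ univ → ∃ x, (a x ∈ S ↔ b x ∉ S)
  isCyclic3 : ∀ v x y z, x ≠ y → x ≠ z → y ≠ z →
    IsEnd a b x v → IsEnd a b y v → IsEnd a b z v → IsCyclic3 B x y z

namespace IsTreeModel

variable [Fintype P] {B : V → V → ℤ} (hT : IsTreeModel B a b)
include hT

lemma apply_self (x : V) : B x x = 0 := by
  have := hT.skew x x; omega

lemma natAbs_le_one (x y : V) : (B x y).natAbs ≤ 1 := by
  rcases eq_or_ne x y with rfl | hxy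
  · simp [hT.apply_self]
  · rw [hT.natAbs_eq x y hxy]; split_ifs <;> simp

lemma bounds (x y : V) : -1 ≤ B x y ∧ B x y ≤ 1 := by
  have := hT.natAbs_le_one x y; omega

lemma ne_zero_iff_meets {x y : V} (hxy : x ≠ y) : B x y ≠ 0 ↔ Meets a b x y := by
  rw [← Int.natAbs_ne_zero, hT.natAbs_eq x y hxy]; split_ifs with h <;> simpa using h

lemma meets_of_ne_zero {x y : V} (hxy : x ≠ y) (h : B x y ≠ 0) : Meets a b x y :=
  (hT.ne_zero_iff_meets hxy).1 h

lemma ends_ne (x : V) : a x ≠ b x := fun h =>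
  hT.linearIndependent.ne_zero x (by simp [edgeVec, h])

lemma eq_of_isEnd_of_isEnd {x y : V} {p w : P} (hpw : p ≠ w) (hxp : IsEnd a b x p)
    (hxw : IsEnd a b x w) (hyp : IsEnd a b y p) (hyw : IsEnd a b y w) : x = y := by
  by_contra hxy
  obtain ⟨ε, hε, hεx⟩ := exists_smul_edgeVec_eq hxp hxw hpw
  obtain ⟨δ, -, hδy⟩ := exists_smul_edgeVec_eq hyp hyw hpw
  exact hε (smul_eq_zero_of_linearIndependent_two hT.linearIndependent hxy
    (t := -δ) (by rw [neg_smul, hεx, hδy, add_neg_cancel]))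

lemma exists_isEnd_of_meets {x y z : V} (hxy : x ≠ y) (hxz : x ≠ z) (hyz : y ≠ z)
    (sxy : Meets a b x y) (syz : Meets a b y z) (szx : Meets a b z x) :
    ∃ v, IsEnd a b x v ∧ IsEnd a b y v ∧ IsEnd a b z v := by
  obtain ⟨u, hxu, hyu⟩ := sxy
  obtain ⟨v, hyv, hzv⟩ := syz
  obtain ⟨w, hzw, hxw⟩ := szx
  by_cases huv : u = v
  · exact ⟨u, hxu, hyu, huv ▸ hzv⟩
  by_cases hvw : v = w
  · exact ⟨v, hvw ▸ hxw, hyv, hzv⟩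
  by_cases huw : u = w
  · exact ⟨u, hxu, hyu, huw ▸ hzw⟩
  -- otherwise `x`, `y`, `z` would be the triangle `u w`, `v u`, `w v` in the tree
  obtain ⟨εx, hεx, hx⟩ := exists_smul_edgeVec_eq hxu hxw huw
  obtain ⟨εy, -, hy⟩ := exists_smul_edgeVec_eq hyv hyu (Ne.symm huv)
  obtain ⟨εz, -, hz⟩ := exists_smul_edgeVec_eq hzw hzv (Ne.symm hvw)
  refine absurd (smul_eq_zero_of_linearIndependent_three hT.linearIndependent hxy hxz hyz
    (t := εy) (u := εz) ?_) hεx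
  rw [hx, hy, hz]; abel

lemma false_of_four_isEnd {v : P} {x y z t : V} (hxy : x ≠ y) (hxz : x ≠ z) (hxt : x ≠ t)
    (hyz : y ≠ z) (hyt : y ≠ t) (hzt : z ≠ t) (hx : IsEnd a b x v) (hy : IsEnd a b y v)
    (hz : IsEnd a b z v) (ht : IsEnd a b t v) : False :=
  false_of_three_isCyclic3 hT.skew (hT.isCyclic3 v x y t hxy hxt hyt hx hy ht)
    (hT.isCyclic3 v x z t hxz hxt hzt hx hz ht) (hT.isCyclic3 v y z t hyz hyt hzt hy hz ht)

end IsTreeModel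

end TreeModel

/-! ### Unitriangular families of roots -/

lemma linearIndependent_single_sub_single {ι R : Type*} [Fintype ι] [Ring R] {N : ℕ}
    {c p : ι → Fin N} (hc : Function.Injective c) (hcp : ∀ i, c i < p i) :
    LinearIndependent R fun i => (Pi.single (c i) 1 - Pi.single (p i) 1 : Fin N → R) := by
  classical
  rw [Fintype.linearIndependent_iff]
  intro g hg
  suffices ∀ m : ℕ, ∀ i, (c i : ℕ) = m → g i = 0 from fun i => this _ i rfl
  intro m
  induction m using Nat.strong_induction_on with
  | _ m ih =>
    rintro i rfl
    -- the coordinate `c i` only sees `g i` and the coefficients of vectors ending at `c i`,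
    -- whose starting points come before `c i`
    have hcoord := congrFun hg (c i)
    simp only [Finset.sum_apply, Pi.smul_apply, Pi.sub_apply, Pi.single_apply, hc.eq_iff,
      smul_eq_mul, mul_sub, sum_sub_distrib, mul_ite, mul_one, mul_zero,
      sum_ite_eq, mem_univ, if_true, Pi.zero_apply] at hcoord
    rwa [sum_eq_zero (fun j _ => ?_), sub_zero] at hcoord
    split_ifs with h
    · exact ih _ (h ▸ hcp j) j rfl
    · rfl

section RootLattice

variable {n : ℕ}

lemma eVec_succ {m i : ℕ} (hi : i < m) : eVec m (i + 1) = Pi.single ⟨i, hi⟩ 1 := by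
  funext k; simp [eVec, Pi.single_apply, Fin.ext_iff]

lemma sum_Ico_alA {i j : ℕ} (hij : i ≤ j) :
    ∑ t ∈ Ico i j, alA n t = eVec (n + 1) i - eVec (n + 1) j := by
  induction j, hij using Nat.le_induction with
  | base => simp
  | succ j hij ih => rw [sum_Ico_succ_top hij, ih, alA]; abel

lemma ip_eVec_sub_eVec {m i j k l : ℕ} (hi : i < m) (hj : j < m) (hk : k < m) (hl : l < m) :
    ip (eVec m (i + 1) - eVec m (j + 1)) (eVec m (k + 1) - eVec m (l + 1)) =
      (if i = k then 1 else 0) - (if i = l then 1 else 0) - (if j = k then 1 else 0) +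
        (if j = l then 1 else 0) := by
  simp only [eVec_succ hi, eVec_succ hj, eVec_succ hk, eVec_succ hl, ip, Pi.sub_apply,
    mul_sub, sum_sub_distrib, Pi.single_apply, mul_ite, mul_one, mul_zero, sum_ite_eq', mem_univ,
    if_true, Fin.mk.injEq, eq_comm (a := k), eq_comm (a := l)]
  ring

variable {ι : Type*} {c p : ι → ℕ}

lemma eVec_sub_eVec_mem_phiA (hcp : ∀ i, c i < p i) (hp : ∀ i, p i ≤ n) (i : ι) :
    eVec (n + 1) (c i + 1) - eVec (n + 1) (p i + 1) ∈ PhiA n :=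
  ⟨c i + 1, p i + 1, by omega, by have := hcp i; have := hp i; omega, by omega,
    by have := hp i; omega, by have := hcp i; omega, rfl⟩

variable [Fintype ι]

lemma linearIndependent_eVec_sub_eVec (hc : Function.Injective c) (hcp : ∀ i, c i < p i)
    (hp : ∀ i, p i ≤ n) :
    LinearIndependent ℤ fun i => eVec (n + 1) (c i + 1) - eVec (n + 1) (p i + 1) := by
  have h := linearIndependent_single_sub_single (R := ℝ)
    (c := fun i => (⟨c i, by have := hcp i; have := hp i; omega⟩ : Fin (n + 1)))
    (p := fun i => ⟨p i, by have := hp i; omega⟩)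
    (fun i j hij => hc (Fin.mk.inj hij)) (fun i => Fin.mk_lt_mk.2 (hcp i))
  simp only [← eVec_succ] at h
  exact h.restrict_scalars' ℤ

lemma exists_eq_of_injective_of_lt {c : ι → ℕ} (hc : Function.Injective c)
    (hlt : ∀ i, c i < n) (hcard : Fintype.card ι = n) {m : ℕ} (hm : m < n) :
    ∃ i, c i = m := by
  have hbij : Function.Bijective fun i => (⟨c i, hlt i⟩ : Fin n) :=
    (Fintype.bijective_iff_injective_and_card _).2
      ⟨fun i j hij => hc (Fin.mk.inj hij), by rw [hcard, Fintype.card_fin]⟩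
  obtain ⟨i, hi⟩ := hbij.2 ⟨m, hm⟩
  exact ⟨i, Fin.mk.inj hi⟩

lemma alA_mem_span_eVec_sub_eVec (hc : Function.Injective c) (hcp : ∀ i, c i < p i)
    (hp : ∀ i, p i ≤ n) (hcard : Fintype.card ι = n) {m : ℕ} (hm : m < n) :
    alA n (m + 1) ∈
      Submodule.span ℤ (Set.range fun i => eVec (n + 1) (c i + 1) - eVec (n + 1) (p i + 1)) := by
  set M := Submodule.span ℤ (Set.range fun i => eVec (n + 1) (c i + 1) - eVec (n + 1) (p i + 1))
  suffices ∀ k m, n - k ≤ m → m < n → alA n (m + 1) ∈ M from this n m (by omega) hm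
  intro k
  induction k with
  | zero => intro m h1 h2; omega
  | succ k ih =>
    intro m h1 h2
    -- `α_m = (e_m - e_{p i + 1}) - (α_{m+1} + ⋯ + α_{p i})` where `c i + 1 = m`
    obtain ⟨i, rfl⟩ :=
      exists_eq_of_injective_of_lt hc (fun i => (hcp i).trans_le (hp i)) hcard h2
    have hmem : eVec (n + 1) (c i + 1) - eVec (n + 1) (p i + 1) ∈ M :=
      Submodule.subset_span ⟨i, rfl⟩
    rw [← sum_Ico_alA (by have := hcp i; omega),
      sum_eq_sum_Ico_succ_bot (by have := hcp i; omega)] at hmem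
    refine (Submodule.add_mem_iff_left M (Submodule.sum_mem M fun t ht => ?_)).1 hmem
    simp only [mem_Ico] at ht
    obtain ⟨t, rfl⟩ : ∃ t', t = t' + 1 := ⟨t - 1, by omega⟩
    exact ih t (by omega) (by have := hp i; omega)

lemma span_eVec_sub_eVec (hc : Function.Injective c) (hcp : ∀ i, c i < p i)
    (hp : ∀ i, p i ≤ n) (hcard : Fintype.card ι = n) :
    Submodule.span ℤ (Set.range fun i => eVec (n + 1) (c i + 1) - eVec (n + 1) (p i + 1)) =
      Submodule.span ℤ (PhiA n) := by
  set M := Submodule.span ℤ (Set.range fun i => eVec (n + 1) (c i + 1) - eVec (n + 1) (p i + 1))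
  refine le_antisymm (Submodule.span_mono ?_) (Submodule.span_le.2 ?_)
  · rintro _ ⟨i, rfl⟩; exact eVec_sub_eVec_mem_phiA hcp hp i
  rintro _ ⟨i, j, hi1, hi2, hj1, hj2, hij, rfl⟩
  have hα : ∀ t ∈ Ico (min i j) (max i j), alA n t ∈ M := by
    intro t ht
    simp only [mem_Ico] at ht
    obtain ⟨t, rfl⟩ : ∃ t', t = t' + 1 := ⟨t - 1, by omega⟩
    exact alA_mem_span_eVec_sub_eVec hc hcp hp hcard (by omega)
  rcases lt_or_gt_of_ne hij with h | h
  · rw [← sum_Ico_alA h.le]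
    exact Submodule.sum_mem M fun t ht => hα t (by rwa [min_eq_left h.le, max_eq_right h.le])
  · rw [← neg_sub, ← sum_Ico_alA h.le]
    exact M.neg_mem (Submodule.sum_mem M fun t ht =>
      hα t (by rwa [min_eq_right h.le, max_eq_left h.le]))

end RootLattice

/-! ### Orientations of `A_n` -/

section Path

variable {n : ℕ}

lemma meets_castSucc_succ_iff {i j : Fin n} (hij : i ≠ j) :
    Meets Fin.castSucc Fin.succ i j ↔ i.val + 1 = j.val ∨ j.val + 1 = i.val := by
  have := Fin.val_ne_of_ne hij
  simp only [Meets, IsEnd, Fin.ext_iff, Fin.val_castSucc, Fin.val_succ]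
  constructor
  · rintro ⟨v, hi, hj⟩; omega
  · rintro (h | h)
    · exact ⟨i.succ, by simp [h]⟩
    · exact ⟨j.succ, by simp [h]⟩

lemma isTreeModel_of_isOrientationA {O : Fin n → Fin n → ℤ} (hO : IsOrientationA O) :
    IsTreeModel O Fin.castSucc Fin.succ where
  linearIndependent := linearIndependent_single_sub_single (Fin.castSucc_injective n)
    fun _ => Fin.castSucc_lt_succ
  natAbs_eq x y hxy := by simp only [hO.2, meets_castSucc_succ_iff hxy]
  skew := hO.1
  connected S hne hS := by
    by_contra! hcut
    have hall : ∀ j : Fin (n + 1), j ∈ S ↔ 0 ∈ S := by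
      intro j
      induction j using Fin.induction with
      | zero => rfl
      | succ i ih => have := hcut i; tauto
    obtain ⟨s, hs⟩ := hne
    exact hS (eq_univ_of_forall fun j => (hall j).2 ((hall s).1 hs))
  isCyclic3 v x y z hxy hxz hyz hx hy hz := by
    simp only [IsEnd, Fin.ext_iff, Fin.val_castSucc, Fin.val_succ] at hx hy hz
    have := Fin.val_ne_of_ne hxy
    have := Fin.val_ne_of_ne hxz
    have := Fin.val_ne_of_ne hyz
    omega

end Path

/-! ### Mutation -/

section Mutation

variable {V P : Type*}

lemma mutQ_of_ne_of_ne [DecidableEq V] {B : V → V → ℤ} {k x y : V} (hx : x ≠ k)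
    (hy : y ≠ k) :
    mutQ B k x y = B x y + Int.sign (B x k) * max (B x k * B k y) 0 := by
  simp [mutQ, hx, hy]

lemma mutQ_eq_self [DecidableEq V] {B : V → V → ℤ} {k x y : V} (hx : x ≠ k) (hy : y ≠ k)
    (h : B x k * B k y ≤ 0) : mutQ B k x y = B x y := by
  rw [mutQ_of_ne_of_ne hx hy, max_eq_right h, mul_zero, add_zero]

lemma sign_mul_max_mul_eq (s t : ℤ) :
    Int.sign t * max (s * t) 0 = Int.sign s * max (s * t) 0 := by
  rcases lt_trichotomy (s * t) 0 with h | h | h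
  · rw [max_eq_right h.le]; ring
  · rw [h]; simp
  · rcases mul_pos_iff.mp h with ⟨hs, ht⟩ | ⟨hs, ht⟩
    · rw [Int.sign_eq_one_of_pos hs, Int.sign_eq_one_of_pos ht]
    · rw [Int.sign_eq_neg_one_of_neg hs, Int.sign_eq_neg_one_of_neg ht]

lemma mutQ_skew [DecidableEq V] {B : V → V → ℤ} (h : ∀ x y, B y x = -B x y) (k x y : V) :
    mutQ B k y x = -mutQ B k x y := by
  by_cases hxy : x = k ∨ y = k
  · simp only [mutQ, hxy, hxy.symm, if_true, h x y]
  · push Not at hxy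
    rw [mutQ_of_ne_of_ne hxy.2 hxy.1, mutQ_of_ne_of_ne hxy.1 hxy.2, h x y, h x k, h k y,
      neg_mul_neg, mul_comm (B k y), Int.sign_neg, neg_mul, sign_mul_max_mul_eq]
    ring

variable [DecidableEq P]

lemma single_swap_apply (u w i : P) :
    (Pi.single (Equiv.swap u w i) 1 : P → ℤ) = Pi.single i 1 -
      (Pi.single u 1 - Pi.single w 1 : P → ℤ) i • (Pi.single u 1 - Pi.single w 1) := by
  funext j
  simp only [Pi.single_apply, Pi.sub_apply, Pi.smul_apply, Equiv.swap_apply_def, smul_eq_mul]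
  split_ifs <;> subst_vars <;> simp_all

/-- The ends of the edges after mutation at `k`: an edge with an arrow to `k` slides along `k`,
its end at one end of `k` moving to the other end of `k`. -/
def mutEnds (B : V → V → ℤ) (a b : V → P) (k : V) (c : V → P) (x : V) : P :=
  if 0 < B x k then Equiv.swap (a k) (b k) (c x) else c x

lemma edgeVec_mutEnds (B : V → V → ℤ) (a b : V → P) (k : V) :
    edgeVec (mutEnds B a b k a) (mutEnds B a b k b) = edgeVec a b + fun x =>
      (if 0 < B x k then edgeVec a b k (b x) - edgeVec a b k (a x) else 0) • edgeVec a b k := by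
  funext x
  by_cases h : 0 < B x k
  · simp only [edgeVec, mutEnds, Pi.add_apply, h, if_true, single_swap_apply]; module
  · simp [edgeVec, mutEnds, h]

lemma isEnd_mutEnds_iff {B : V → V → ℤ} {a b : V → P} {k x : V} {v : P} :
    IsEnd (mutEnds B a b k a) (mutEnds B a b k b) x v ↔
      IsEnd a b x (if 0 < B x k then Equiv.swap (a k) (b k) v else v) := by
  unfold IsEnd mutEnds
  split_ifs
  · rw [Equiv.swap_apply_eq_iff, Equiv.swap_apply_eq_iff, eq_comm, eq_comm (a := v)]
  · rfl

lemma isEnd_swap_iff {a b : V → P} {k : V} {v : P} :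
    IsEnd a b k (Equiv.swap (a k) (b k) v) ↔ IsEnd a b k v := by
  unfold IsEnd
  by_cases h1 : v = a k
  · subst h1; simp [or_comm]
  by_cases h2 : v = b k
  · subst h2; simp [or_comm]
  rw [Equiv.swap_apply_of_ne_of_ne h1 h2]

lemma swap_apply_of_not_isEnd {a b : V → P} {k : V} {v : P} (hv : ¬ IsEnd a b k v) :
    Equiv.swap (a k) (b k) v = v :=
  Equiv.swap_apply_of_ne_of_ne (fun h => hv (.inl h)) (fun h => hv (.inr h))

lemma swap_eq_of_isEnd {a b : V → P} {k : V} {p q : P} (hp : IsEnd a b k p)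
    (hq : IsEnd a b k q) (hpq : p ≠ q) : Equiv.swap (a k) (b k) p = q := by
  rcases hp with rfl | rfl <;> rcases hq with rfl | rfl <;> simp_all

lemma swap_ne_self_of_isEnd {a b : V → P} {k : V} {p : P} (hab : a k ≠ b k)
    (hp : IsEnd a b k p) : Equiv.swap (a k) (b k) p ≠ p := by
  rcases hp with rfl | rfl <;> simp [hab, hab.symm]

end Mutation

namespace IsTreeModel

variable {V P : Type*} [DecidableEq P] [Fintype P] {B : V → V → ℤ}
  {a b : V → P} (hT : IsTreeModel B a b) {k : V}
include hT

lemma not_pos_self : ¬ 0 < B k k := by rw [hT.apply_self]; exact lt_irrefl 0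

lemma mutEnds_self (c : V → P) : mutEnds B a b k c k = c k := by
  simp [mutEnds, hT.not_pos_self]

lemma ne_zero_of_isEnd {x : V} {v : P} (hxk : x ≠ k) (hx : IsEnd a b x v) (hk : IsEnd a b k v) :
    B x k ≠ 0 :=
  (hT.ne_zero_iff_meets hxk).2 ⟨v, hx, hk⟩

lemma eq_of_isEnd_of_isEnd_self {x : V} {p q : P} (hxk : x ≠ k) (hxp : IsEnd a b x p)
    (hxq : IsEnd a b x q) (hkp : IsEnd a b k p) (hkq : IsEnd a b k q) : p = q := by
  by_contra hpq
  exact hxk (hT.eq_of_isEnd_of_isEnd hpq hxp hxq hkp hkq)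

lemma swap_apply_of_isEnd_of_eq_zero {y : V} {v : P} (hyk : y ≠ k) (hB : B y k = 0)
    (hy : IsEnd a b y v) : Equiv.swap (a k) (b k) v = v :=
  Equiv.swap_apply_of_ne_of_ne (fun h => hT.ne_zero_of_isEnd hyk hy (.inl h) hB)
    (fun h => hT.ne_zero_of_isEnd hyk hy (.inr h) hB)

lemma eq_of_isEnd_of_nonpos {x y : V} {p : P} (hkp : IsEnd a b k p) (hxk : x ≠ k) (hyk : y ≠ k)
    (hx : IsEnd a b x p) (hy : IsEnd a b y p) (hxB : B x k ≤ 0) (hyB : B y k ≤ 0) : x = y := by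
  by_contra hxy
  rcases hT.isCyclic3 p k x y hxk.symm hyk.symm hxy hkp hx hy with h | h
  · exact absurd h.2.2 (by omega)
  · exact absurd h.2.2 (by omega)

lemma eq_of_isEnd_of_pos {x y : V} {p : P} (hkp : IsEnd a b k p) (hx : IsEnd a b x p)
    (hy : IsEnd a b y p) (hxB : 0 < B x k) (hyB : 0 < B y k) : x = y := by
  by_contra hxy
  have hxk : x ≠ k := by rintro rfl; exact hT.not_pos_self hxB
  have hyk : y ≠ k := by rintro rfl; exact hT.not_pos_self hyB
  rcases hT.isCyclic3 p k x y hxk.symm hyk.symm hxy hkp hx hy with h | h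
  · have := hT.skew k x; exact absurd h.1 (by omega)
  · have := hT.skew k y; exact absurd h.1 (by omega)

lemma eq_of_isEnd_mutEnds {s t : V} {v : P} (hkv : IsEnd a b k v) (hsk : s ≠ k) (htk : t ≠ k)
    (hs : IsEnd (mutEnds B a b k a) (mutEnds B a b k b) s v)
    (ht : IsEnd (mutEnds B a b k a) (mutEnds B a b k b) t v) (hst : 0 < B s k ↔ 0 < B t k) :
    s = t := by
  rw [isEnd_mutEnds_iff] at hs ht
  by_cases hsB : 0 < B s k
  · simp only [hsB, hst.1 hsB, if_true] at hs ht
    exact hT.eq_of_isEnd_of_pos (isEnd_swap_iff.2 hkv) hs ht hsB (hst.1 hsB)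
  · simp only [hsB, mt hst.2 hsB, if_false] at hs ht
    exact hT.eq_of_isEnd_of_nonpos hkv hsk htk hs ht (not_lt.1 hsB) (not_lt.1 (mt hst.2 hsB))

lemma not_meets_mutEnds {x y : V} {p : P} (hxy : x ≠ y) (hxk : x ≠ k) (hyk : y ≠ k)
    (hxp : IsEnd a b x p) (hyp : IsEnd a b y p) (hkp : IsEnd a b k p) :
    ¬ ∃ v, IsEnd a b x (Equiv.swap (a k) (b k) v) ∧ IsEnd a b y v := by
  rintro ⟨v, hxv, hyv⟩
  by_cases hkv : IsEnd a b k v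
  · refine swap_ne_self_of_isEnd (hT.ends_ne k) hkp ?_
    exact (congrArg _ (hT.eq_of_isEnd_of_isEnd_self hyk hyp hyv hkp hkv)).trans
      (hT.eq_of_isEnd_of_isEnd_self hxk hxv hxp (isEnd_swap_iff.2 hkv) hkp)
  · rw [swap_apply_of_not_isEnd hkv] at hxv
    exact hxy (hT.eq_of_isEnd_of_isEnd (show v ≠ p from fun h => hkv (h ▸ hkp)) hxv hxp hyv hyp)

lemma meets_mutEnds_iff_of_mul_nonpos {x y : V} (hxk : x ≠ k) (hyk : y ≠ k)
    (h : B x k * B k y ≤ 0) :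
    Meets (mutEnds B a b k a) (mutEnds B a b k b) x y ↔ Meets a b x y := by
  have := hT.skew y k
  simp only [Meets, isEnd_mutEnds_iff]
  by_cases hxB : 0 < B x k <;> by_cases hyB : 0 < B y k <;> simp only [hxB, hyB, if_true,
    if_false]
  · exact ⟨fun ⟨v, h⟩ => ⟨_, h⟩,
      fun ⟨v, h⟩ => ⟨Equiv.swap (a k) (b k) v, by simpa using h⟩⟩
  · -- `y` does not meet `k`, so the swap fixes its ends
    have hy0 : B y k = 0 := by nlinarith
    refine exists_congr fun v => and_congr_left fun hy => ?_
    rw [hT.swap_apply_of_isEnd_of_eq_zero hyk hy0 hy]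
  · have hx0 : B x k = 0 := by nlinarith
    refine exists_congr fun v => and_congr_right fun hx => ?_
    rw [hT.swap_apply_of_isEnd_of_eq_zero hxk hx0 hx]

lemma meets_mutEnds_self_iff {y : V} :
    Meets (mutEnds B a b k a) (mutEnds B a b k b) k y ↔ Meets a b k y := by
  simp only [Meets, isEnd_mutEnds_iff, hT.not_pos_self, if_false]
  split_ifs
  · exact ⟨fun ⟨v, hk, hy⟩ => ⟨_, isEnd_swap_iff.2 hk, hy⟩,
      fun ⟨v, hk, hy⟩ =>
        ⟨Equiv.swap (a k) (b k) v, isEnd_swap_iff.2 hk, by simpa using hy⟩⟩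
  · rfl

variable [DecidableEq V]

lemma mutQ_eq_self_of_isEnd {x y : V} {v : P} (hxy : x ≠ y) (hx : IsEnd a b x v)
    (hy : IsEnd a b y v) (hv : ¬ IsEnd a b k v) : mutQ B k x y = B x y := by
  have hxk : x ≠ k := by rintro rfl; exact hv hx
  have hyk : y ≠ k := by rintro rfl; exact hv hy
  by_cases hB : B x k * B k y ≤ 0
  · exact mutQ_eq_self hxk hyk hB
  -- otherwise `x`, `y` and `k` meet pairwise, hence at an end of `k`, which is not `v`
  have hxk0 : B x k ≠ 0 := by rintro h; simp [h] at hB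
  have hky0 : B k y ≠ 0 := by rintro h; simp [h] at hB
  obtain ⟨w, hxw, hyw, hkw⟩ := hT.exists_isEnd_of_meets hxy hxk hyk ⟨v, hx, hy⟩
    (hT.meets_of_ne_zero hyk (by rw [hT.skew k y]; exact neg_ne_zero.2 hky0))
    (hT.meets_of_ne_zero hxk hxk0).symm
  exact absurd (hT.eq_of_isEnd_of_isEnd (show w ≠ v from fun h => hv (h ▸ hkw)) hxw hx hyw hy)
    hxy

lemma cyc3_mutQ {e f : V} {v : P} (hkv : IsEnd a b k v) (hek : e ≠ k) (he : IsEnd a b e v)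
    (heB : B e k < 0) (hf : IsEnd a b f (Equiv.swap (a k) (b k) v)) (hfB : 0 < B f k) :
    Cyc3 (mutQ B k) k f e := by
  have hfk : f ≠ k := by rintro rfl; exact hT.not_pos_self hfB
  have hef : e ≠ f := by rintro rfl; omega
  -- `e` and `f` meet `k` at its two different ends, so they do not meet
  have hfe : B f e = 0 := by
    by_contra hfe
    have hkσ : IsEnd a b k (Equiv.swap (a k) (b k) v) := isEnd_swap_iff.2 hkv
    obtain ⟨w, hew, hfw, hkw⟩ := hT.exists_isEnd_of_meets hef hek hfk
      (hT.meets_of_ne_zero hef.symm hfe).symm ⟨_, hf, hkσ⟩ ⟨v, hkv, he⟩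
    refine swap_ne_self_of_isEnd (hT.ends_ne k) hkv ?_
    rw [hT.eq_of_isEnd_of_isEnd_self hfk hf hfw hkσ hkw,
      hT.eq_of_isEnd_of_isEnd_self hek he hew hkv hkw]
  have := hT.bounds f k
  have := hT.bounds e k
  have := hT.skew e k
  have := hT.skew f k
  refine ⟨?_, ?_, ?_⟩
  · simp only [mutQ, true_or, if_true]; omega
  · rw [mutQ_of_ne_of_ne hfk hek, hfe, show B f k = 1 by omega, show B k e = 1 by omega]
    decide
  · simp only [mutQ, or_true, if_true]; omega

lemma isCyclic3_mutQ_self {y z : V} {v : P} (hkv : IsEnd a b k v) (hyk : y ≠ k) (hzk : z ≠ k)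
    (hyz : y ≠ z) (hy : IsEnd (mutEnds B a b k a) (mutEnds B a b k b) y v)
    (hz : IsEnd (mutEnds B a b k a) (mutEnds B a b k b) z v) :
    IsCyclic3 (mutQ B k) k y z := by
  rw [isEnd_mutEnds_iff] at hy hz
  have hkσ : IsEnd a b k (Equiv.swap (a k) (b k) v) := isEnd_swap_iff.2 hkv
  by_cases hyB : 0 < B y k <;> by_cases hzB : 0 < B z k <;> simp only [hyB, hzB, if_true,
    if_false] at hy hz
  · exact absurd (hT.eq_of_isEnd_of_pos hkσ hy hz hyB hzB) hyz
  · have := hT.ne_zero_of_isEnd hzk hz hkv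
    exact .inl (hT.cyc3_mutQ hkv hzk hz (by omega) hy hyB)
  · have := hT.ne_zero_of_isEnd hyk hy hkv
    exact .inr (hT.cyc3_mutQ hkv hyk hy (by omega) hz hzB)
  · exact absurd (hT.eq_of_isEnd_of_nonpos hkv hyk hzk hy hz (by omega) (by omega)) hyz

lemma isCyclic3_mutQ {v : P} {x y z : V} (hxy : x ≠ y) (hxz : x ≠ z) (hyz : y ≠ z)
    (hx : IsEnd (mutEnds B a b k a) (mutEnds B a b k b) x v)
    (hy : IsEnd (mutEnds B a b k a) (mutEnds B a b k b) y v)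
    (hz : IsEnd (mutEnds B a b k a) (mutEnds B a b k b) z v) :
    IsCyclic3 (mutQ B k) x y z := by
  by_cases hkv : IsEnd a b k v
  · -- one of the three edges is `k`, since two others would have both slid or both stayed
    by_cases hxk : x = k
    · subst hxk; exact hT.isCyclic3_mutQ_self hkv hxy.symm hxz.symm hyz hy hz
    by_cases hyk : y = k
    · subst hyk
      exact (hT.isCyclic3_mutQ_self hkv hyz.symm hxy hxz.symm hz hx).rotate.rotate
    by_cases hzk : z = k
    · subst hzk
      exact (hT.isCyclic3_mutQ_self hkv hxz hyz hxy hx hy).rotate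
    have := hT.eq_of_isEnd_mutEnds hkv hxk hyk hx hy
    have := hT.eq_of_isEnd_mutEnds hkv hxk hzk hx hz
    have := hT.eq_of_isEnd_mutEnds hkv hyk hzk hy hz
    tauto
  · rw [isEnd_mutEnds_iff, swap_apply_of_not_isEnd hkv, ite_self] at hx hy hz
    have h := hT.isCyclic3 v x y z hxy hxz hyz hx hy hz
    have e := fun p q (hpq : p ≠ q) hp hq => hT.mutQ_eq_self_of_isEnd (k := k) hpq hp hq hkv
    unfold IsCyclic3 Cyc3 at h ⊢
    rwa [e x y hxy hx hy, e y z hyz hy hz, e z x hxz.symm hz hx, e x z hxz hx hz,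
      e z y hyz.symm hz hy, e y x hxy.symm hy hx]

lemma natAbs_mutQ_of_pos_of_neg {x y : V} (hxB : 0 < B x k) (hyB : B y k < 0) :
    (mutQ B k x y).natAbs =
      if Meets (mutEnds B a b k a) (mutEnds B a b k b) x y then 1 else 0 := by
  have hxk : x ≠ k := by rintro rfl; exact hT.not_pos_self hxB
  have hyk : y ≠ k := by rintro rfl; have := hT.apply_self y; omega
  have hxy : x ≠ y := by rintro rfl; omega
  have := hT.bounds x k
  have := hT.bounds y k
  have := hT.skew y k
  have hmut : mutQ B k x y = B x y + 1 := by
    rw [mutQ_of_ne_of_ne hxk hyk, show B x k = 1 by omega, show B k y = 1 by omega]; rfl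
  obtain ⟨p, hxp, hkp⟩ := hT.meets_of_ne_zero hxk hxB.ne'
  obtain ⟨q, hyq, hkq⟩ := hT.meets_of_ne_zero hyk hyB.ne
  simp only [Meets, isEnd_mutEnds_iff, hxB, not_lt.2 hyB.le, if_true, if_false]
  by_cases hpq : p = q
  · -- `x`, `k`, `y` form an oriented 3-cycle at `p`, which mutation at `k` destroys
    subst hpq
    have hyx : B x y = -1 := by
      have := hT.bounds y x
      have := hT.skew x y
      rcases hT.isCyclic3 p x k y hxk hxy hyk.symm hxp hkp hyq with h | h
      · have := h.2.2; omega
      · have := h.2.1; omega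
    rw [if_neg (hT.not_meets_mutEnds hxy hxk hyk hxp hyq hkp), hmut, hyx]; rfl
  · -- `x` slides onto the end `q` of `k`, where it meets `y`
    have hxy0 : B x y = 0 := by
      by_contra h
      obtain ⟨w, hxw, hyw, hkw⟩ := hT.exists_isEnd_of_meets hxy hxk hyk
        (hT.meets_of_ne_zero hxy h) ⟨q, hyq, hkq⟩ ⟨p, hkp, hxp⟩
      exact hpq ((hT.eq_of_isEnd_of_isEnd_self hxk hxp hxw hkp hkw).trans
        (hT.eq_of_isEnd_of_isEnd_self hyk hyq hyw hkq hkw).symm)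
    rw [if_pos ⟨q, by rwa [swap_eq_of_isEnd hkq hkp (Ne.symm hpq)], hyq⟩, hmut, hxy0]; rfl

lemma natAbs_mutQ {x y : V} (hxy : x ≠ y) :
    (mutQ B k x y).natAbs =
      if Meets (mutEnds B a b k a) (mutEnds B a b k b) x y then 1 else 0 := by
  by_cases hxk : x = k
  · subst hxk
    simp only [mutQ, true_or, if_true, Int.natAbs_neg, hT.meets_mutEnds_self_iff,
      hT.natAbs_eq _ _ hxy]
  by_cases hyk : y = k
  · subst hyk
    simp only [mutQ, or_true, if_true, Int.natAbs_neg, meets_comm (x := x),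
      hT.meets_mutEnds_self_iff, hT.natAbs_eq _ _ hxy]
  by_cases h : B x k * B k y ≤ 0
  · simp only [mutQ_eq_self hxk hyk h, hT.meets_mutEnds_iff_of_mul_nonpos hxk hyk h,
      hT.natAbs_eq _ _ hxy]
  -- the only pairs whose arrows change are an arrow into `k` and an arrow out of `k`
  have := hT.skew k y
  rcases lt_or_gt_of_ne (show B x k ≠ 0 by rintro h0; simp [h0] at h) with hxB | hxB
  · rw [← Int.natAbs_neg, ← mutQ_skew hT.skew k x y,
      hT.natAbs_mutQ_of_pos_of_neg (by nlinarith) hxB]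
    simp only [meets_comm]
  · exact hT.natAbs_mutQ_of_pos_of_neg hxB (by nlinarith)

lemma mutQ_mutEnds : IsTreeModel (mutQ B k) (mutEnds B a b k a) (mutEnds B a b k b) where
  linearIndependent := by
    rw [edgeVec_mutEnds]
    exact (linearIndependent_add_smul_iff (by simp [hT.not_pos_self])).2 hT.linearIndependent
  natAbs_eq _ _ := hT.natAbs_mutQ
  skew := mutQ_skew hT.skew k
  connected S hne hS := by
    by_cases hk : a k ∈ S ↔ b k ∉ S
    · exact ⟨k, by rwa [hT.mutEnds_self, hT.mutEnds_self]⟩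
    -- otherwise the swap of the ends of `k` preserves `S`
    have hσ : ∀ v, Equiv.swap (a k) (b k) v ∈ S ↔ v ∈ S := by
      intro v
      rw [Equiv.swap_apply_def]
      split_ifs with h1 h2 <;> subst_vars <;> tauto
    obtain ⟨x, hx⟩ := hT.connected S hne hS
    exact ⟨x, by unfold mutEnds; split_ifs <;> simpa [hσ]⟩
  isCyclic3 _ _ _ _ hxy hxz hyz hx hy hz := hT.isCyclic3_mutQ hxy hxz hyz hx hy hz

end IsTreeModel

namespace IsTreeModel

variable {V W P : Type*} [DecidableEq P] [Fintype P]

lemma exists_mutSeq [DecidableEq V] {B : V → V → ℤ} {a b : V → P}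
    (hT : IsTreeModel B a b) (l : List V) :
    ∃ a' b' : V → P, IsTreeModel (mutSeq B l) a' b' := by
  induction l generalizing B a b with
  | nil => exact ⟨a, b, hT⟩
  | cons k l ih => exact ih hT.mutQ_mutEnds

lemma comp_equiv {M : W → W → ℤ} {a b : W → P} (hT : IsTreeModel M a b) (e : V ≃ W) :
    IsTreeModel (fun x y => M (e x) (e y)) (a ∘ e) (b ∘ e) where
  linearIndependent := hT.linearIndependent.comp e e.injective
  natAbs_eq x y hxy := hT.natAbs_eq (e x) (e y) (e.injective.ne hxy)
  skew x y := hT.skew (e x) (e y)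
  connected S hne hS := by
    obtain ⟨w, hw⟩ := hT.connected S hne hS
    exact ⟨e.symm w, by simpa using hw⟩
  isCyclic3 v x y z hxy hxz hyz := hT.isCyclic3 v (e x) (e y) (e z) (e.injective.ne hxy)
    (e.injective.ne hxz) (e.injective.ne hyz)

end IsTreeModel

lemma IsMutTypeA.exists_isTreeModel {V : Type*} [DecidableEq V] {n : ℕ} {B : V → V → ℤ}
    (hB : IsMutTypeA n B) : ∃ a b : V → Fin (n + 1), IsTreeModel B a b := by
  obtain ⟨e, O, l, hO, hBO⟩ := hB
  obtain ⟨a, b, hT⟩ := (isTreeModel_of_isOrientationA hO).exists_mutSeq l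
  refine ⟨a ∘ e, b ∘ e, ?_⟩
  convert hT.comp_equiv e using 1
  funext x y
  exact hBO x y

/-! ### Preorder labellings of trees -/

section FiniteTree

variable {V P : Type*} [DecidableEq P] (a b : V → P)

structure IsTreeOn (A : Finset V) (W : Finset P) : Prop where
  ends_mem : ∀ x ∈ A, a x ∈ W ∧ b x ∈ W
  ends_ne : ∀ x ∈ A, a x ≠ b x
  card_eq : #W = #A + 1
  connected : ∀ S ⊆ W, S.Nonempty → S ≠ W → ∃ x ∈ A, (a x ∈ S ↔ b x ∉ S)

namespace IsTreeOn

variable {a b} {A : Finset V} {W : Finset P} (hT : IsTreeOn a b A W)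
include hT

lemma sum_card_isEnd : ∑ v ∈ W, #{x ∈ A | IsEnd a b x v} = 2 * #A := by
  calc ∑ v ∈ W, #{x ∈ A | IsEnd a b x v} = ∑ x ∈ A, #{v ∈ W | IsEnd a b x v} := by
        simp only [card_filter]; exact sum_comm
    _ = ∑ _x ∈ A, 2 := sum_congr rfl fun x hx => ?_
    _ = 2 * #A := by rw [sum_const, smul_eq_mul, mul_comm]
  have : {v ∈ W | IsEnd a b x v} = {a x, b x} := by
    ext v
    rw [mem_filter, mem_insert, mem_singleton]
    constructor
    · exact fun h => h.2
    · rintro (rfl | rfl)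
      exacts [⟨(hT.ends_mem x hx).1, .inl rfl⟩, ⟨(hT.ends_mem x hx).2, .inr rfl⟩]
  rw [this, card_pair (hT.ends_ne x hx)]

lemma exists_card_isEnd_le_one : ∃ r ∈ W, #{x ∈ A | IsEnd a b x r} ≤ 1 := by
  obtain ⟨r, hr, h⟩ := exists_lt_of_sum_lt (f := fun v => #{x ∈ A | IsEnd a b x v})
    (g := fun _ => 2) (s := W) (by rw [hT.sum_card_isEnd, sum_const, hT.card_eq]; simp; omega)
  exact ⟨r, hr, by omega⟩

lemma one_le_card_isEnd (hW : 2 ≤ #W) {v : P} (hv : v ∈ W) :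
    1 ≤ #{x ∈ A | IsEnd a b x v} := by
  obtain ⟨x, hx, hcut⟩ := hT.connected {v} (singleton_subset_iff.2 hv) (singleton_nonempty v)
    (by rintro rfl; simp at hW)
  refine card_pos.2 ⟨x, mem_filter.2 ⟨hx, ?_⟩⟩
  simp only [mem_singleton] at hcut
  unfold IsEnd; tauto

lemma exists_leaf_ne (hA : A.Nonempty) {r : P} (hr : r ∈ W) :
    ∃ v ∈ W, v ≠ r ∧ #{x ∈ A | IsEnd a b x v} = 1 := by
  have hW : 2 ≤ #W := by rw [hT.card_eq]; have := hA.card_pos; omega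
  have hsum := hT.sum_card_isEnd
  rw [← add_sum_erase W _ hr] at hsum
  have := hT.one_le_card_isEnd hW hr
  obtain ⟨v, hv, h⟩ := exists_lt_of_sum_lt (f := fun v => #{x ∈ A | IsEnd a b x v})
    (g := fun _ => 2) (s := W.erase r)
    (by rw [sum_const, card_erase_of_mem hr, hT.card_eq]; simp; omega)
  have := hT.one_le_card_isEnd hW (mem_of_mem_erase hv)
  exact ⟨v, mem_of_mem_erase hv, ne_of_mem_erase hv, by omega⟩

lemma erase_leaf [DecidableEq V] {x : V} {v : P} (hx : x ∈ A) (hxv : IsEnd a b x v)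
    (hleaf : ∀ y ∈ A, IsEnd a b y v → y = x) : IsTreeOn a b (A.erase x) (W.erase v) where
  ends_mem y hy := by
    obtain ⟨hyx, hy⟩ := mem_erase.1 hy
    have hv : ∀ u, IsEnd a b y u → u ≠ v := fun u hu huv => hyx (hleaf y hy (huv ▸ hu))
    exact ⟨mem_erase.2 ⟨hv _ (isEnd_left a b y), (hT.ends_mem y hy).1⟩,
      mem_erase.2 ⟨hv _ (isEnd_right a b y), (hT.ends_mem y hy).2⟩⟩
  ends_ne y hy := hT.ends_ne y (mem_of_mem_erase hy)
  card_eq := by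
    have hvW : v ∈ W := by
      rcases hxv with rfl | rfl
      exacts [(hT.ends_mem x hx).1, (hT.ends_mem x hx).2]
    rw [card_erase_of_mem hvW, card_erase_of_mem hx, hT.card_eq]
    have := card_pos.2 ⟨x, hx⟩
    omega
  connected S hS hne hSW := by
    have hvS : v ∉ S := fun h => (mem_erase.1 (hS h)).1 rfl
    -- put `v` next to the other end of `x` and cut the whole tree
    set S' := if a x ∈ S ∨ b x ∈ S then insert v S else S with hS'
    have hmem : ∀ u ≠ v, (u ∈ S' ↔ u ∈ S) := by
      intro u hu; rw [hS']; split_ifs <;> simp [hu]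
    have hS'W : S' ⊆ W := by
      rw [hS']
      split_ifs
      · rcases hxv with rfl | rfl
        exacts [insert_subset (hT.ends_mem x hx).1 (hS.trans (erase_subset _ _)),
          insert_subset (hT.ends_mem x hx).2 (hS.trans (erase_subset _ _))]
      · exact hS.trans (erase_subset _ _)
    obtain ⟨t, htW, htS⟩ : ∃ t ∈ W.erase v, t ∉ S := by
      by_contra! h; exact hSW (Subset.antisymm hS h)
    obtain ⟨y, hy, hcut⟩ := hT.connected S' hS'W
      (hne.mono (by rw [hS']; split_ifs <;> simp [subset_insert]))
      (fun h => htS ((hmem t (ne_of_mem_erase htW)).1 (h ▸ mem_of_mem_erase htW)))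
    have hyx : y ≠ x := by
      rintro rfl
      rw [hS'] at hcut
      split_ifs at hcut with h
      · simp only [mem_insert] at hcut
        rcases hxv with rfl | rfl <;> tauto
      · tauto
    have hyv : ∀ u, IsEnd a b y u → u ≠ v := fun u hu huv => hyx (hleaf y hy (huv ▸ hu))
    exact ⟨y, mem_erase.2 ⟨hyx, hy⟩, by
      rwa [← hmem _ (hyv _ (isEnd_left a b y)), ← hmem _ (hyv _ (isEnd_right a b y))]⟩

end IsTreeOn

end FiniteTree

section Labelling

variable {V P : Type*} (a b : V → P)

def minLabel (lab : P → ℕ) (x : V) : ℕ := min (lab (a x)) (lab (b x))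

def maxLabel (lab : P → ℕ) (x : V) : ℕ := max (lab (a x)) (lab (b x))

/-- A labelling of the points of a tree on `W` rooted at `r` by `0, …, #A`, decreasing away from
the root, in which the lower ends of the edges have distinct labels and the first child of a
point labelled `m` is labelled `m - 1`: a preorder traversal counted down from the root. -/
structure IsPreorderLabelling (A : Finset V) (W : Finset P) (r : P) (lab : P → ℕ) : Prop where
  injOn : Set.InjOn lab W
  le_card : ∀ v ∈ W, lab v ≤ #A
  apply_root : lab r = #A
  minLabel_injOn : Set.InjOn (minLabel a b lab) A
  exists_first_child : ∀ x ∈ A, ∃ y ∈ A,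
    maxLabel a b lab y = maxLabel a b lab x ∧ minLabel a b lab y + 1 = maxLabel a b lab x

def succAboveNat (L t : ℕ) : ℕ := if L ≤ t then t + 1 else t

lemma succAboveNat_strictMono (L : ℕ) : StrictMono (succAboveNat L) := by
  intro s t h; unfold succAboveNat; split_ifs <;> omega

lemma succAboveNat_ne (L t : ℕ) : succAboveNat L t ≠ L := by
  unfold succAboveNat; split_ifs <;> omega

section InsertLeaf

variable [DecidableEq P]

/-- `lab` with the labels from `lab w` on shifted up, making room for a new point `v` just
below `w`. -/
def insertLabel (lab : P → ℕ) (v w : P) (u : P) : ℕ :=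
  if u = v then lab w else succAboveNat (lab w) (lab u)

variable {a b} {lab : P → ℕ} {v w : P}

lemma insertLabel_of_ne {u : P} (hu : u ≠ v) :
    insertLabel lab v w u = succAboveNat (lab w) (lab u) := if_neg hu

lemma minLabel_insertLabel {y : V} (hy : a y ≠ v ∧ b y ≠ v) :
    minLabel a b (insertLabel lab v w) y = succAboveNat (lab w) (minLabel a b lab y) := by
  rw [minLabel, minLabel, insertLabel_of_ne hy.1, insertLabel_of_ne hy.2,
    (succAboveNat_strictMono _).monotone.map_min]

lemma maxLabel_insertLabel {y : V} (hy : a y ≠ v ∧ b y ≠ v) :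
    maxLabel a b (insertLabel lab v w) y = succAboveNat (lab w) (maxLabel a b lab y) := by
  rw [maxLabel, maxLabel, insertLabel_of_ne hy.1, insertLabel_of_ne hy.2,
    (succAboveNat_strictMono _).monotone.map_max]

lemma minLabel_maxLabel_insertLabel {x : V} (hwv : w ≠ v)
    (hx : (a x = v ∧ b x = w) ∨ (a x = w ∧ b x = v)) :
    minLabel a b (insertLabel lab v w) x = lab w ∧
      maxLabel a b (insertLabel lab v w) x = lab w + 1 := by
  have hw : insertLabel lab v w w = lab w + 1 := by
    rw [insertLabel_of_ne hwv]; simp [succAboveNat]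
  have hv : insertLabel lab v w v = lab w := if_pos rfl
  rcases hx with ⟨hxa, hxb⟩ | ⟨hxa, hxb⟩ <;>
    simp only [minLabel, maxLabel, hxa, hxb, hw, hv] <;> omega

lemma IsPreorderLabelling.insert_leaf [DecidableEq V] {A : Finset V} {W : Finset P} {r : P}
    (h : IsPreorderLabelling a b A W r lab) {x : V} (hxA : x ∉ A) (hvW : v ∉ W) (hw : w ∈ W)
    (hr : r ∈ W) (hA : ∀ y ∈ A, a y ≠ v ∧ b y ≠ v)
    (hx : (a x = v ∧ b x = w) ∨ (a x = w ∧ b x = v)) :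
    IsPreorderLabelling a b (insert x A) (insert v W) r (insertLabel lab v w) := by
  have hL : lab w ≤ #A := h.le_card w hw
  have hsm := succAboveNat_strictMono (lab w)
  obtain ⟨hxmin, hxmax⟩ := minLabel_maxLabel_insertLabel (lab := lab)
    (show w ≠ v from fun h => hvW (h ▸ hw)) hx
  refine ⟨?_, fun u hu => ?_, ?_, ?_, ?_⟩
  · intro p hp q hq hpq
    simp only [coe_insert, Set.mem_insert_iff, mem_coe] at hp hq
    by_cases hpv : p = v <;> by_cases hqv : q = v <;>
      simp only [insertLabel, hpv, hqv, if_true, if_false] at hpq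
    · rw [hpv, hqv]
    · exact absurd hpq.symm (succAboveNat_ne _ _)
    · exact absurd hpq (succAboveNat_ne _ _)
    · exact h.injOn (hp.resolve_left hpv) (hq.resolve_left hqv) (hsm.injective hpq)
  · rw [card_insert_of_notMem hxA]
    by_cases huv : u = v
    · rw [huv, insertLabel, if_pos rfl]; omega
    · have := h.le_card u ((mem_insert.1 hu).resolve_left huv)
      rw [insertLabel_of_ne huv, succAboveNat]; split_ifs <;> omega
  · rw [card_insert_of_notMem hxA, insertLabel_of_ne (show r ≠ v from fun h => hvW (h ▸ hr)),
      h.apply_root,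
      succAboveNat, if_pos hL]
  · intro y hy z hz hyz
    simp only [coe_insert, Set.mem_insert_iff, mem_coe] at hy hz
    rcases hy with rfl | hy <;> rcases hz with rfl | hz
    · rfl
    · exact absurd (hxmin.symm.trans (hyz.trans (minLabel_insertLabel (hA z hz)))).symm
        (succAboveNat_ne _ _)
    · exact absurd ((minLabel_insertLabel (hA y hy)).symm.trans (hyz.trans hxmin))
        (succAboveNat_ne _ _)
    · rw [minLabel_insertLabel (hA y hy), minLabel_insertLabel (hA z hz)] at hyz
      exact h.minLabel_injOn hy hz (hsm.injective hyz)
  · intro y hy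
    rcases mem_insert.1 hy with rfl | hy
    · exact ⟨y, mem_insert_self _ _, rfl, by omega⟩
    obtain ⟨z, hz, hzmax, hzmin⟩ := h.exists_first_child y hy
    rw [maxLabel_insertLabel (hA y hy)]
    by_cases hyL : maxLabel a b lab y = lab w
    · -- the new leaf becomes the first child of `w`
      refine ⟨x, mem_insert_self _ _, ?_, ?_⟩ <;> simp [hxmin, hxmax, hyL, succAboveNat]
    · refine ⟨z, mem_insert_of_mem hz, by rw [maxLabel_insertLabel (hA z hz), hzmax], ?_⟩
      rw [minLabel_insertLabel (hA z hz), ← hzmin]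
      unfold succAboveNat; split_ifs <;> omega

theorem IsTreeOn.exists_isPreorderLabelling [DecidableEq V] {A : Finset V} {W : Finset P}
    (hT : IsTreeOn a b A W) {r : P} (hr : r ∈ W) :
    ∃ lab, IsPreorderLabelling a b A W r lab := by
  obtain ⟨N, hN⟩ : ∃ N, #A = N := ⟨_, rfl⟩
  induction N generalizing A W with
  | zero =>
    obtain rfl : A = ∅ := card_eq_zero.1 hN
    have hW : #W ≤ 1 := by simp [hT.card_eq]
    exact ⟨fun _ => 0, fun p hp q hq _ => card_le_one.1 hW p hp q hq, by simp, by simp, by simp,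
      by simp⟩
  | succ N ih =>
    -- remove a leaf `v ≠ r` and its edge `x`, label the rest, and put `v` back
    obtain ⟨v, hvW, hvr, hv⟩ := hT.exists_leaf_ne (card_pos.1 (by omega)) hr
    obtain ⟨x, hx⟩ := card_eq_one.1 hv
    have hleaf : ∀ y ∈ A, IsEnd a b y v → y = x := fun y hy hyv =>
      mem_singleton.1 (hx ▸ mem_filter.2 ⟨hy, hyv⟩)
    obtain ⟨hxA, hxv⟩ := mem_filter.1 (hx ▸ mem_singleton_self x)
    have hT' := hT.erase_leaf hxA hxv hleaf
    obtain ⟨lab, hlab⟩ := ih hT' (mem_erase.2 ⟨hvr.symm, hr⟩)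
      (by rw [card_erase_of_mem hxA, hN]; rfl)
    set w := if a x = v then b x else a x with hw
    have hx' : (a x = v ∧ b x = w) ∨ (a x = w ∧ b x = v) := by
      rw [hw]; split_ifs with h
      · exact .inl ⟨h, rfl⟩
      · exact .inr ⟨rfl, hxv.resolve_left (Ne.symm h) |>.symm⟩
    have hwW : w ∈ W.erase v := by
      have := hT.ends_ne x hxA
      have := hT.ends_mem x hxA
      rcases hx' with ⟨h1, h2⟩ | ⟨h1, h2⟩ <;> simp_all [mem_erase, eq_comm]
    have := hlab.insert_leaf (notMem_erase x A) (notMem_erase v W) hwW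
      (mem_erase.2 ⟨hvr.symm, hr⟩)
      (fun y hy => ⟨ne_of_mem_erase (hT'.ends_mem y hy).1,
        ne_of_mem_erase (hT'.ends_mem y hy).2⟩) hx'
    rw [insert_erase hxA, insert_erase hvW] at this
    exact ⟨_, this⟩

end InsertLeaf

variable {a b}

lemma exists_isEnd_label_eq_maxLabel (a b : V → P) (lab : P → ℕ) (x : V) :
    ∃ v, IsEnd a b x v ∧ lab v = maxLabel a b lab x := by
  rcases max_choice (lab (a x)) (lab (b x)) with h | h
  exacts [⟨a x, .inl rfl, h.symm⟩, ⟨b x, .inr rfl, h.symm⟩]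

lemma exists_isEnd_label_eq_minLabel (a b : V → P) (lab : P → ℕ) (x : V) :
    ∃ v, IsEnd a b x v ∧ lab v = minLabel a b lab x := by
  rcases min_choice (lab (a x)) (lab (b x)) with h | h
  exacts [⟨a x, .inl rfl, h.symm⟩, ⟨b x, .inr rfl, h.symm⟩]

namespace IsPreorderLabelling

variable [Fintype V] [Fintype P] {r : P} {lab : P → ℕ}
  (hL : IsPreorderLabelling a b univ univ r lab)
include hL

lemma injective : Function.Injective lab := by simpa using hL.injOn

lemma minLabel_injective : Function.Injective (minLabel a b lab) := by
  simpa using hL.minLabel_injOn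

lemma isEnd_iff {x : V} {v : P} :
    IsEnd a b x v ↔ lab v = minLabel a b lab x ∨ lab v = maxLabel a b lab x := by
  simp only [IsEnd, ← hL.injective.eq_iff, minLabel, maxLabel]
  omega

lemma meets_iff {x y : V} : Meets a b x y ↔ minLabel a b lab x = minLabel a b lab y ∨
    minLabel a b lab x = maxLabel a b lab y ∨ maxLabel a b lab x = minLabel a b lab y ∨
    maxLabel a b lab x = maxLabel a b lab y := by
  constructor
  · rintro ⟨v, hx, hy⟩
    rw [hL.isEnd_iff] at hx hy
    omega
  · intro h
    obtain ⟨u, hu, hlu⟩ := exists_isEnd_label_eq_minLabel a b lab x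
    obtain ⟨w, hw, hlw⟩ := exists_isEnd_label_eq_maxLabel a b lab x
    by_cases hlo : minLabel a b lab x = minLabel a b lab y ∨
      minLabel a b lab x = maxLabel a b lab y
    · exact ⟨u, hu, hL.isEnd_iff.2 (by omega)⟩
    · exact ⟨w, hw, hL.isEnd_iff.2 (by omega)⟩

lemma maxLabel_le (x : V) : maxLabel a b lab x ≤ Fintype.card V := by
  have := hL.le_card (a x) (mem_univ _)
  have := hL.le_card (b x) (mem_univ _)
  simp only [maxLabel, card_univ] at *
  omega

lemma maxLabel_lt_of_ne (hr : ∀ x y, IsEnd a b x r → IsEnd a b y r → x = y) {x y : V}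
    (hxy : x ≠ y) (h : maxLabel a b lab x = maxLabel a b lab y) :
    maxLabel a b lab x < Fintype.card V := by
  refine (hL.maxLabel_le x).lt_of_ne fun hN => hxy (hr x y ?_ ?_)
  · obtain ⟨v, hv, hlv⟩ := exists_isEnd_label_eq_maxLabel a b lab x
    rwa [hL.injective (hlv.trans (hN.trans (hL.apply_root.trans card_univ).symm))] at hv
  · obtain ⟨v, hv, hlv⟩ := exists_isEnd_label_eq_maxLabel a b lab y
    rwa [hL.injective (hlv.trans (h.symm.trans (hN.trans (hL.apply_root.trans card_univ).symm)))]
      at hv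

end IsPreorderLabelling

end Labelling

/-! ### The companion basis of a labelled tree model -/

lemma IsTreeModel.exists_isPreorderLabelling {V P : Type*} [Fintype V] [DecidableEq V]
    [Fintype P] [DecidableEq P] {B : V → V → ℤ} {a b : V → P} (hT : IsTreeModel B a b)
    (hcard : Fintype.card P = Fintype.card V + 1) :
    ∃ r lab, (∀ x y, IsEnd a b x r → IsEnd a b y r → x = y) ∧
      IsPreorderLabelling a b univ univ r lab := by
  have hT' : IsTreeOn a b univ univ :=
    { ends_mem := fun _ _ => ⟨mem_univ _, mem_univ _⟩
      ends_ne := fun x _ => hT.ends_ne x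
      card_eq := by simpa using hcard
      connected := fun S _ hne hS =>
        let ⟨x, hx⟩ := hT.connected S hne hS; ⟨x, mem_univ x, hx⟩ }
  -- root the tree at a leaf
  obtain ⟨r, -, hr⟩ := hT'.exists_card_isEnd_le_one
  obtain ⟨lab, hlab⟩ := hT'.exists_isPreorderLabelling (mem_univ r)
  exact ⟨r, lab, fun x y hx hy => card_le_one.1 hr x (by simpa using hx) y (by simpa using hy),
    hlab⟩


namespace IsTreeModel

variable {V P : Type*} [Fintype V] [DecidableEq P] [Fintype P] {B : V → V → ℤ} {a b : V → P}
  {r : P} {lab : P → ℕ} (hT : IsTreeModel B a b) (hL : IsPreorderLabelling a b univ univ r lab)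
  (hr : ∀ x y, IsEnd a b x r → IsEnd a b y r → x = y)

local notation "lo" => minLabel a b lab
local notation "hi" => maxLabel a b lab

include hT hL

lemma minLabel_lt_maxLabel (x : V) : lo x < hi x := by
  have := hL.injective.ne (hT.ends_ne x)
  simp only [minLabel, maxLabel]
  omega

lemma minLabel_bijective :
    Function.Bijective fun x => (⟨lo x, (hT.minLabel_lt_maxLabel hL x).trans_le
      (hL.maxLabel_le x)⟩ : Fin (Fintype.card V)) :=
  (Fintype.bijective_iff_injective_and_card _).2
    ⟨fun _ _ h => hL.minLabel_injective (Fin.mk.inj h), (Fintype.card_fin _).symm⟩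

lemma exists_minLabel_eq {m : ℕ} (hm : m < Fintype.card V) : ∃ x, lo x = m :=
  exists_eq_of_injective_of_lt hL.minLabel_injective
    (fun x => (hT.minLabel_lt_maxLabel hL x).trans_le (hL.maxLabel_le x)) rfl hm

include hr

lemma false_of_maxLabel_eq {x y z : V} (hxy : x ≠ y) (hxz : x ≠ z) (hyz : y ≠ z)
    (hy : hi y = hi x) (hz : hi z = hi x) : False := by
  -- the point labelled `hi x < #V` is also the lower end of a fourth edge
  obtain ⟨t, ht⟩ := hT.exists_minLabel_eq hL (hL.maxLabel_lt_of_ne hr hxy hy.symm)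
  obtain ⟨v, hxv, hv⟩ := exists_isEnd_label_eq_maxLabel a b lab x
  have hend : ∀ s, lo s = hi x ∨ hi s = hi x → IsEnd a b s v := fun s hs =>
    hL.isEnd_iff.2 (by omega)
  have := hT.minLabel_lt_maxLabel hL x
  have := hT.minLabel_lt_maxLabel hL y
  have := hT.minLabel_lt_maxLabel hL z
  refine hT.false_of_four_isEnd hxy hxz ?_ hyz ?_ ?_ hxv (hend y (.inr hy)) (hend z (.inr hz))
    (hend t (.inl ht)) <;> rintro rfl <;> omega

lemma minLabel_add_one_eq {x y : V} (hxy : x ≠ y) (h : hi y = hi x) (hlt : lo x < lo y) :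
    lo y + 1 = hi x := by
  obtain ⟨w, -, hw, hwx⟩ := hL.exists_first_child x (mem_univ x)
  by_cases hwy : w = y
  · rwa [← hwy]
  by_cases hwx' : w = x
  · subst hwx'; have := hT.minLabel_lt_maxLabel hL y; omega
  · exact (hT.false_of_maxLabel_eq hL hr hxy (Ne.symm hwx') (Ne.symm hwy) h hw).elim

lemma cyc3_minLabel {x y z : V} (h : Cyc3 B x y z) (hy : lo x < lo y) (hz : lo x < lo z) :
    (lo y = hi x ∧ lo z + 1 = hi x) ∨ (lo z = hi x ∧ lo y + 1 = hi x) := by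
  obtain ⟨h1, h2, h3⟩ := h
  have hne : ∀ s t, 0 < B s t → s ≠ t := fun s t h hst => by
    subst hst; have := hT.apply_self s; omega
  have hxy := hne x y h1
  have hyz := hne y z h2
  have hxz := (hne z x h3).symm
  obtain ⟨v, hxv, hyv, hzv⟩ := hT.exists_isEnd_of_meets hxy hxz hyz
    (hT.meets_of_ne_zero hxy h1.ne') (hT.meets_of_ne_zero hyz h2.ne')
    (hT.meets_of_ne_zero hxz.symm h3.ne')
  rw [hL.isEnd_iff] at hxv hyv hzv
  have := hT.minLabel_lt_maxLabel hL x
  have := hT.minLabel_lt_maxLabel hL y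
  have := hT.minLabel_lt_maxLabel hL z
  have := hL.minLabel_injective.ne hyz
  have : ¬ (hi y = hi x ∧ hi z = hi x) := fun h =>
    hT.false_of_maxLabel_eq hL hr hxy hxz hyz h.1 h.2
  -- the common end of the three edges is the upper end of `x`
  rcases (by omega : (lo y = hi x ∧ hi z = hi x) ∨ (lo z = hi x ∧ hi y = hi x)) with h | h
  · exact .inl ⟨h.1, hT.minLabel_add_one_eq hL hr hxz h.2 hz⟩
  · exact .inr ⟨h.1, hT.minLabel_add_one_eq hL hr hxy h.2 hy⟩

lemma exists_cyc3_of_maxLabel_ne {x : V} (hx : hi x ≠ lo x + 1) :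
    ∃ y z, Cyc3 B x y z ∧ lo x < lo y ∧ lo x < lo z := by
  obtain ⟨w, -, hw, hwx⟩ := hL.exists_first_child x (mem_univ x)
  have hwx' : w ≠ x := by rintro rfl; omega
  obtain ⟨t, ht⟩ := hT.exists_minLabel_eq hL (hL.maxLabel_lt_of_ne hr hwx'.symm hw.symm)
  obtain ⟨v, hxv, hv⟩ := exists_isEnd_label_eq_maxLabel a b lab x
  have hend : ∀ s, lo s = hi x ∨ hi s = hi x → IsEnd a b s v := fun s hs =>
    hL.isEnd_iff.2 (by omega)
  have := hT.minLabel_lt_maxLabel hL x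
  have := hL.minLabel_injective.ne hwx'
  have hxt : x ≠ t := by rintro rfl; omega
  have hwt : w ≠ t := by rintro rfl; omega
  rcases hT.isCyclic3 v x w t hwx'.symm hxt hwt hxv (hend w (.inr hw)) (hend t (.inl ht)) with h | h
  · exact ⟨w, t, h, by omega, by omega⟩
  · exact ⟨t, w, h, by omega, by omega⟩

lemma eq_of_cyc3 {x y z y' z' : V} (h : Cyc3 B x y z) (h' : Cyc3 B x y' z') (hy : lo x < lo y)
    (hz : lo x < lo z) (hy' : lo x < lo y') (hz' : lo x < lo z') :
    (y = y' ∧ z = z') ∨ (y = z' ∧ z = y') := by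
  have := hT.cyc3_minLabel hL hr h hy hz
  have := hT.cyc3_minLabel hL hr h' hy' hz'
  rcases (by omega : (lo y = lo y' ∧ lo z = lo z') ∨ (lo y = lo z' ∧ lo z = lo y')) with h | h
  · exact .inl ⟨hL.minLabel_injective h.1, hL.minLabel_injective h.2⟩
  · exact .inr ⟨hL.minLabel_injective h.1, hL.minLabel_injective h.2⟩

lemma sum_Icc_alA_of_cyc3 {x y z : V} (h : Cyc3 B x y z) (hy : lo x < lo y) (hz : lo x < lo z) :
    ∑ t ∈ Icc (lo x + 1) (min (lo y + 1) (lo z + 1)), alA (Fintype.card V) t =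
      eVec (Fintype.card V + 1) (lo x + 1) - eVec (Fintype.card V + 1) (hi x + 1) := by
  have := hT.cyc3_minLabel hL hr h hy hz
  rw [show min (lo y + 1) (lo z + 1) = hi x by omega, ← Ico_add_one_right_eq_Icc,
    sum_Ico_alA (by omega)]

lemma eq_alA_of_not_cyc3 {x : V}
    (hx : ¬ ∃ y z, Cyc3 B x y z ∧ lo x < lo y ∧ lo x < lo z) :
    eVec (Fintype.card V + 1) (lo x + 1) - eVec (Fintype.card V + 1) (hi x + 1) =
      alA (Fintype.card V) (lo x + 1) := by
  by_cases h : hi x = lo x + 1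
  · rw [h, alA]
  · exact absurd (hT.exists_cyc3_of_maxLabel_ne hL hr h) hx

omit hr in
lemma isCompanionBasisA : IsCompanionBasisA (Fintype.card V) B
    fun x => eVec (Fintype.card V + 1) (lo x + 1) - eVec (Fintype.card V + 1) (hi x + 1) := by
  have hlt := hT.minLabel_lt_maxLabel hL
  have hle := hL.maxLabel_le
  refine ⟨eVec_sub_eVec_mem_phiA hlt hle,
    linearIndependent_eVec_sub_eVec hL.minLabel_injective hlt hle,
    span_eVec_sub_eVec hL.minLabel_injective hlt hle rfl, fun x y hxy => ?_⟩
  have := hlt x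
  have := hlt y
  have := hle x
  have := hle y
  have := hL.minLabel_injective.ne hxy
  rw [ip_eVec_sub_eVec (by omega) (by omega) (by omega) (by omega), hT.natAbs_eq x y hxy]
  simp only [hL.meets_iff]
  split_ifs <;> norm_num <;> omega

end IsTreeModel

theorem exists_labelling_companionBasis_typeA_general
    {Γ₀ : Type*} [DecidableEq Γ₀]
    (n : ℕ) (B : Γ₀ → Γ₀ → ℤ) (hB : IsMutTypeA n B) :
    ∃ ℓ : Γ₀ ≃ Fin n,
      (∀ x y z y' z', Cyc3 B x y z → Cyc3 B x y' z' →
        (ℓ x).val < (ℓ y).val → (ℓ x).val < (ℓ z).val →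
        (ℓ x).val < (ℓ y').val → (ℓ x).val < (ℓ z').val →
        (y = y' ∧ z = z') ∨ (y = z' ∧ z = y')) ∧
      ∃ β : ℕ → (Fin (n + 1) → ℝ),
        (∀ x y z, Cyc3 B x y z → (ℓ x).val < (ℓ y).val → (ℓ x).val < (ℓ z).val →
          β ((ℓ x).val + 1) =
            ∑ t ∈ Finset.Icc ((ℓ x).val + 1) (min ((ℓ y).val + 1) ((ℓ z).val + 1)),
              alA n t) ∧
        (∀ x, (¬ ∃ y z, Cyc3 B x y z ∧ (ℓ x).val < (ℓ y).val ∧ (ℓ x).val < (ℓ z).val) →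
          β ((ℓ x).val + 1) = alA n ((ℓ x).val + 1)) ∧
        IsCompanionBasisA n B (fun v => β ((ℓ v).val + 1)) := by
  have : Finite Γ₀ := let ⟨e, _⟩ := hB; .of_equiv _ e.symm
  let _ : Fintype Γ₀ := .ofFinite Γ₀
  obtain rfl : Fintype.card Γ₀ = n := let ⟨e, _⟩ := hB; by simpa using Fintype.card_congr e
  obtain ⟨a, b, hT⟩ := hB.exists_isTreeModel
  obtain ⟨r, lab, hr, hL⟩ := hT.exists_isPreorderLabelling (by simp)
  have hinj : Function.Injective fun x => minLabel a b lab x + 1 :=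
    fun x y h => hL.minLabel_injective (Nat.succ_injective h)
  refine ⟨.ofBijective _ (hT.minLabel_bijective hL), fun x y z y' z' => hT.eq_of_cyc3 hL hr,
    Function.extend (fun x => minLabel a b lab x + 1) (fun x => eVec _ (minLabel a b lab x + 1) -
      eVec _ (maxLabel a b lab x + 1)) (alA _), fun x y z h hy hz => ?_, fun x hx => ?_, ?_⟩
  · exact (hinj.extend_apply _ _ x).trans (hT.sum_Icc_alA_of_cyc3 hL hr h hy hz).symm
  · exact (hinj.extend_apply _ _ x).trans (hT.eq_alA_of_not_cyc3 hL hr hx)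
  · simpa only [Equiv.ofBijective_apply, hinj.extend_apply] using hT.isCompanionBasisA hL

/-- Every quiver `B` of mutation type `A_n` admits a bijective labelling of its
vertices by `1, …, n` (here `ℓ x` has 1-based label `(ℓ x).val + 1`) such that (i)
every vertex is the vertex of smallest label of at most one oriented 3-cycle, and
(ii) the family assigning to the vertex labelled `i` the root
`β_i = α_i + ⋯ + α_j` (if `i` is the smallest and `j` the second-smallest label of
the vertices of an oriented 3-cycle) and `β_i = α_i` otherwise, is a companion basis
for `B` in the root system of type `A_n`. -/
theorem exists_labelling_companionBasis_typeA
    {Γ₀ : Type*} [Fintype Γ₀] [DecidableEq Γ₀]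
    (n : ℕ) (B : Γ₀ → Γ₀ → ℤ) (hB : IsMutTypeA n B) :
    ∃ ℓ : Γ₀ ≃ Fin n,
      (∀ x y z y' z', Cyc3 B x y z → Cyc3 B x y' z' →
        (ℓ x).val < (ℓ y).val → (ℓ x).val < (ℓ z).val →
        (ℓ x).val < (ℓ y').val → (ℓ x).val < (ℓ z').val →
        (y = y' ∧ z = z') ∨ (y = z' ∧ z = y')) ∧
      ∃ β : ℕ → (Fin (n + 1) → ℝ),
        (∀ x y z, Cyc3 B x y z → (ℓ x).val < (ℓ y).val → (ℓ x).val < (ℓ z).val →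
          β ((ℓ x).val + 1) =
            ∑ t ∈ Finset.Icc ((ℓ x).val + 1) (min ((ℓ y).val + 1) ((ℓ z).val + 1)),
              alA n t) ∧
        (∀ x, (¬ ∃ y z, Cyc3 B x y z ∧ (ℓ x).val < (ℓ y).val ∧ (ℓ x).val < (ℓ z).val) →
          β ((ℓ x).val + 1) = alA n ((ℓ x).val + 1)) ∧
        IsCompanionBasisA n B (fun v => β ((ℓ v).val + 1)) :=
  exists_labelling_companionBasis_typeA_general n B hB
end

section
/- Let n ≥ 3, and let i ≥ 1 and a ≥ 1 satisfy i + a + 1 ≤ n. Let Q be any quiver on the vertex set {1, …, n} whose underlying unoriented graph has exactly the edges {j, j+1} for 1 ≤ j ≤ i−1, {j, j+1} for i+1 ≤ j ≤ i+a−1, {j, j+1} for i+a+1 ≤ j ≤ n−1, together with the edges {i, i+a}, {i, i+a+1} and {i+a, i+a+1}. Then in the root system of type A_n the set {β_1, …, β_n} with β_i = α_i + α_{i+1} + ⋯ + α_{i+a} and β_t = α_t for all t ≠ i is a companion basis for Q. -/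
open scoped BigOperators

/-- The prescribed edge set (on 1-based labels): the edges `{j, j+1}` for
`1 ≤ j ≤ i−1`, for `i+1 ≤ j ≤ i+a−1` and for `i+a+1 ≤ j ≤ n−1`, together with the
edges `{i, i+a}`, `{i, i+a+1}` and `{i+a, i+a+1}` (here given as ordered pairs;
symmetrize to obtain the edge relation). -/
def edgeSpec6 (n i a x y : ℕ) : Prop :=
  (x + 1 = y ∧ 1 ≤ x ∧ y ≤ n ∧ x ≠ i ∧ x ≠ i + a) ∨
  (x = i ∧ y = i + a) ∨ (x = i ∧ y = i + a + 1) ∨ (x = i + a ∧ y = i + a + 1)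

lemma sum_alA (n p q : ℕ) (h : p ≤ q) :
    ∑ t ∈ Finset.Icc p q, alA n t = eVec (n+1) p - eVec (n+1) (q+1) := by
  induction q, h using Nat.le_induction with
  | base => simp [alA]
  | succ q hq ih =>
    rw [Finset.sum_Icc_succ_top (by omega), ih]
    unfold alA; abel

lemma ip_e (m p r : ℕ) (hp1 : 1 ≤ p) (hpm : p ≤ m) :
    ip (eVec m p) (eVec m r) = if p = r then 1 else 0 := by
  unfold ip eVec
  rw [Finset.sum_eq_single (⟨p - 1, by omega⟩ : Fin m)]
  · simp only []
    have : (p - 1) + 1 = p := by omega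
    rw [this, if_pos rfl, one_mul]
  · intro b _ hb
    have : ¬ (b.val + 1 = p) := by
      intro h; apply hb; ext; simp; omega
    rw [if_neg this, zero_mul]
  · intro h; exact absurd (Finset.mem_univ _) h

lemma ip_sub_sub (m : ℕ) (u v w z : Fin m → ℝ) :
    ip (u - v) (w - z) = ip u w - ip u z - ip v w + ip v z := by
  unfold ip
  rw [← Finset.sum_sub_distrib, ← Finset.sum_sub_distrib, ← Finset.sum_add_distrib]
  apply Finset.sum_congr rfl
  intro k _
  simp only [Pi.sub_apply]
  ring


set_option maxHeartbeats 4000000 in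
lemma aux4 (n i a : ℕ) (hn : 3 ≤ n) (hi : 1 ≤ i) (ha : 1 ≤ a) (hia : i + a + 1 ≤ n)
    (xv yv : ℕ) (hx : xv < n) (hy : yv < n) (hxy : xv ≠ yv) (m : ℕ)
    (hQ1 : (edgeSpec6 n i a (xv+1) (yv+1) ∨ edgeSpec6 n i a (yv+1) (xv+1)) → m = 1)
    (hQ0 : ¬(edgeSpec6 n i a (xv+1) (yv+1) ∨ edgeSpec6 n i a (yv+1) (xv+1)) → m = 0) :
    |(if xv + 1 = yv + 1 then (1:ℝ) else 0)
      - (if xv + 1 = (if yv + 1 = i then i + a + 1 else yv + 2) then 1 else 0)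
      - (if (if xv + 1 = i then i + a + 1 else xv + 2) = yv + 1 then 1 else 0)
      + (if (if xv + 1 = i then i + a + 1 else xv + 2)
            = (if yv + 1 = i then i + a + 1 else yv + 2) then 1 else 0)| = (m : ℝ) := by
  by_cases hxi : xv + 1 = i <;> by_cases hyi : yv + 1 = i <;>
    simp only [hxi, hyi, if_true, if_false, eq_self_iff_true] <;>
    split_ifs <;>
    first
      | (exfalso; omega)
      | (rw [hQ0 (by unfold edgeSpec6; omega)]; norm_num)
      | (rw [hQ1 (by unfold edgeSpec6; omega)]; norm_num)

/-- For any quiver `Q` on `{1, …, n}` whose underlying unoriented graph has exactly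
the edges described by `edgeSpec6`, the set `{β_1, …, β_n}` with
`β_i = α_i + ⋯ + α_{i+a}` and `β_t = α_t` for `t ≠ i` is a companion basis for `Q`
in the root system of type `A_n`. -/
theorem companionBasis_one_triangle_typeA
    (n i a : ℕ) (hn : 3 ≤ n) (hi : 1 ≤ i) (ha : 1 ≤ a) (hia : i + a + 1 ≤ n)
    (Q : Fin n → Fin n → ℤ) (hskew : ∀ x y, Q y x = -Q x y)
    (hedge : ∀ x y : Fin n,
      ((edgeSpec6 n i a (x.val + 1) (y.val + 1) ∨ edgeSpec6 n i a (y.val + 1) (x.val + 1)) →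
        (Q x y).natAbs = 1) ∧
      (¬(edgeSpec6 n i a (x.val + 1) (y.val + 1) ∨ edgeSpec6 n i a (y.val + 1) (x.val + 1)) →
        Q x y = 0)) :
    IsCompanionBasisA n Q
      (fun v => if v.val + 1 = i then ∑ t ∈ Finset.Icc i (i + a), alA n t
                else alA n (v.val + 1)) := by
  set γ : Fin n → (Fin (n + 1) → ℝ) :=
    fun v => if v.val + 1 = i then ∑ t ∈ Finset.Icc i (i + a), alA n t
             else alA n (v.val + 1) with hγdef
  have hγ : ∀ x : Fin n, γ x =
      eVec (n+1) (x.val + 1) -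
        eVec (n+1) (if x.val + 1 = i then i + a + 1 else x.val + 2) := by
    intro x
    by_cases h : x.val + 1 = i
    · simp only [hγdef]
      rw [if_pos h, if_pos h, sum_alA n i (i+a) (by omega), h]
    · simp only [hγdef]
      rw [if_neg h, if_neg h]
      rfl
  have hmem : ∀ x : Fin n, γ x ∈ PhiA n := by
    intro x
    rw [hγ x]
    exact ⟨x.val + 1, if x.val + 1 = i then i + a + 1 else x.val + 2,
      by omega, by omega, by split_ifs <;> omega, by split_ifs <;> omega,
      by split_ifs <;> omega, rfl⟩
  refine ⟨hmem, ?_, ?_, ?_⟩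
  · -- linear independence
    rw [Fintype.linearIndependent_iff]
    intro g hsum
    have key : ∀ N : ℕ, ∀ x : Fin n, x.val = N → g x = 0 := by
      intro N
      induction N using Nat.strong_induction_on with
      | _ N ih =>
        intro x hx
        have hN : N < n := hx ▸ x.isLt
        have hk0 := congrFun hsum (⟨N, by omega⟩ : Fin (n+1))
        have hkval : ((⟨N, by omega⟩ : Fin (n+1)) : ℕ) = N := rfl
        simp only [Finset.sum_apply, Pi.smul_apply, hγ, Pi.sub_apply, eVec,
          Pi.zero_apply] at hk0
        simp only [zsmul_eq_mul, mul_sub] at hk0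
        rw [Finset.sum_sub_distrib] at hk0
        have h1 : ∑ x' : Fin n, (g x' : ℝ) *
            (if ((⟨N, by omega⟩ : Fin (n+1)) : ℕ) + 1 = x'.val + 1 then (1:ℝ) else 0)
            = (g x : ℝ) := by
          rw [Finset.sum_eq_single x]
          · rw [if_pos (by rw [hkval]; omega), mul_one]
          · intro b _ hb
            rw [if_neg (fun hcon => hb (Fin.ext (by rw [hkval] at hcon; omega))), mul_zero]
          · intro h; exact absurd (Finset.mem_univ x) h
        have h2 : ∑ x' : Fin n, (g x' : ℝ) *
            (if ((⟨N, by omega⟩ : Fin (n+1)) : ℕ) + 1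
                = (if x'.val + 1 = i then i + a + 1 else x'.val + 2) then (1:ℝ) else 0)
            = 0 := by
          apply Finset.sum_eq_zero
          intro x' _
          by_cases hc : ((⟨N, by omega⟩ : Fin (n+1)) : ℕ) + 1
              = (if x'.val + 1 = i then i + a + 1 else x'.val + 2)
          · have hlt : x'.val < N := by
              rw [hkval] at hc; split_ifs at hc <;> omega
            rw [ih x'.val hlt x' rfl]
            simp
          · rw [if_neg hc, mul_zero]
        rw [h1, h2, sub_zero] at hk0
        exact_mod_cast hk0
    intro x
    exact key x.val x rfl
  · -- span equality
    apply le_antisymm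
    · rw [Submodule.span_le]
      rintro v ⟨x, rfl⟩
      exact Submodule.subset_span (hmem x)
    · rw [Submodule.span_le]
      have hal_ne : ∀ t, 1 ≤ t → t ≤ n → t ≠ i →
          alA n t ∈ Submodule.span ℤ (Set.range γ) := by
        intro t h1 h2 h3
        have ht : (t - 1) + 1 = t := by omega
        have hγt : γ ⟨t - 1, by omega⟩ = alA n t := by
          simp only [hγdef]
          show (if (t - 1) + 1 = i then _ else alA n ((t - 1) + 1)) = alA n t
          rw [ht, if_neg h3]
        rw [← hγt]
        exact Submodule.subset_span ⟨_, rfl⟩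
      have hal : ∀ t, 1 ≤ t → t ≤ n →
          alA n t ∈ Submodule.span ℤ (Set.range γ) := by
        intro t h1 h2
        by_cases h3 : t = i
        · rw [h3]
          have ht : (i - 1) + 1 = i := by omega
          have hI : γ ⟨i - 1, by omega⟩ = eVec (n+1) i - eVec (n+1) (i + a + 1) := by
            rw [hγ]
            show eVec (n+1) ((i-1)+1) -
              eVec (n+1) (if (i-1)+1 = i then i + a + 1 else (i-1)+2) = _
            rw [ht, if_pos rfl]
          have key : alA n i = (eVec (n+1) i - eVec (n+1) (i + a + 1)) -
              ∑ s ∈ Finset.Icc (i+1) (i+a), alA n s := by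
            rw [sum_alA n (i+1) (i+a) (by omega)]
            unfold alA
            abel
          rw [key]
          refine sub_mem (hI ▸ Submodule.subset_span ⟨_, rfl⟩) (Submodule.sum_mem _ ?_)
          intro s hs
          rw [Finset.mem_Icc] at hs
          exact hal_ne s (by omega) (by omega) (by omega)
        · exact hal_ne t h1 h2 h3
      rintro v ⟨p, q, hp1, hp2, hq1, hq2, hpq, rfl⟩
      rcases Nat.lt_or_ge p q with hlt | hge
      · have hq' : (q - 1) + 1 = q := by omega
        have hv : eVec (n+1) p - eVec (n+1) q = ∑ t ∈ Finset.Icc p (q-1), alA n t := by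
          rw [sum_alA n p (q-1) (by omega), hq']
        rw [hv]
        refine Submodule.sum_mem _ ?_
        intro t ht
        rw [Finset.mem_Icc] at ht
        exact hal t (by omega) (by omega)
      · have hp' : (p - 1) + 1 = p := by omega
        have hv : eVec (n+1) p - eVec (n+1) q
            = -(∑ t ∈ Finset.Icc q (p-1), alA n t) := by
          rw [sum_alA n q (p-1) (by omega), hp']
          abel
        rw [hv]
        refine neg_mem (Submodule.sum_mem _ ?_)
        intro t ht
        rw [Finset.mem_Icc] at ht
        exact hal t (by omega) (by omega)
  · -- inner products
    intro x y hxy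
    rw [hγ x, hγ y, ip_sub_sub,
      ip_e (n+1) (x.val+1) (y.val+1) (by omega) (by omega),
      ip_e (n+1) (x.val+1) (if y.val + 1 = i then i + a + 1 else y.val + 2)
        (by omega) (by omega),
      ip_e (n+1) (if x.val + 1 = i then i + a + 1 else x.val + 2) (y.val+1)
        (by split_ifs <;> omega) (by split_ifs <;> omega),
      ip_e (n+1) (if x.val + 1 = i then i + a + 1 else x.val + 2)
        (if y.val + 1 = i then i + a + 1 else y.val + 2)
        (by split_ifs <;> omega) (by split_ifs <;> omega)]
    exact aux4 n i a hn hi ha hia x.val y.val x.isLt y.isLt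
      (fun h => hxy (Fin.ext h)) (Q x y).natAbs ((hedge x y).1)
      (fun h => by rw [(hedge x y).2 h]; rfl)
end

section
/- Let n ≥ 3, and let i ≥ 1 and a ≥ 1 satisfy i + a + 1 ≤ n. Mutating the linearly oriented quiver 1→2→⋯→n consecutively at the vertices i+1, i+2, …, i+a yields exactly the quiver on {1, …, n} with arrows j→j+1 for 1 ≤ j ≤ i−1, arrows j→j+1 for i+1 ≤ j ≤ i+a−1, arrows j→j+1 for i+a+1 ≤ j ≤ n−1, together with the oriented 3-cycle consisting of the arrows i → i+a+1, i+a+1 → i+a and i+a → i. -/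
/-- The linearly oriented quiver `1 → 2 → ⋯ → n`, as a skew-symmetric matrix on the
(1-based) labels `1, …, n`. -/
def linN (n : ℕ) : ℕ → ℕ → ℤ := fun x y =>
  if x + 1 = y ∧ 1 ≤ x ∧ y ≤ n then 1
  else if y + 1 = x ∧ 1 ≤ y ∧ x ≤ n then -1 else 0

/-- The arrow indicator of the target quiver: arrows `j → j+1` for `1 ≤ j ≤ i−1`, for
`i+1 ≤ j ≤ i+a−1` and for `i+a+1 ≤ j ≤ n−1` (i.e. all `1 ≤ j ≤ n-1` with `j ≠ i` and
`j ≠ i+a`), together with the oriented 3-cycle `i → i+a+1 → i+a → i`. -/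
def arrTgt (n i a : ℕ) (x y : ℕ) : ℤ :=
  if (x + 1 = y ∧ 1 ≤ x ∧ y ≤ n ∧ x ≠ i ∧ x ≠ i + a) ∨
     (x = i ∧ y = i + a + 1) ∨ (x = i + a + 1 ∧ y = i + a) ∨ (x = i + a ∧ y = i)
  then 1 else 0

lemma signmax (u v : ℤ) (hu : u = -1 ∨ u = 0 ∨ u = 1) (hv : v = -1 ∨ v = 0 ∨ v = 1) :
    Int.sign u * max (u * v) 0 =
      if u = 1 ∧ v = 1 then 1 else if u = -1 ∧ v = -1 then -1 else 0 := by
  rcases hu with h | h | h <;> rcases hv with h' | h' | h' <;> subst h <;> subst h' <;> decide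

lemma lin_mem (n x y : ℕ) : linN n x y = -1 ∨ linN n x y = 0 ∨ linN n x y = 1 := by
  unfold linN; split_ifs <;> simp

lemma tgt_mem (n i a x y : ℕ) :
    arrTgt n i a x y - arrTgt n i a y x = -1 ∨ arrTgt n i a x y - arrTgt n i a y x = 0 ∨
      arrTgt n i a x y - arrTgt n i a y x = 1 := by
  unfold arrTgt; split_ifs <;> simp

lemma uval (n i a x : ℕ) (hi : 1 ≤ i) (ha : 1 ≤ a) (hn : i + a + 2 ≤ n) :
    arrTgt n i a x (i + a + 1) - arrTgt n i a (i + a + 1) x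
      = if x = i then 1 else if x = i + a ∨ x = i + a + 2 then -1 else 0 := by
  unfold arrTgt; split_ifs <;> omega

lemma vval (n i a y : ℕ) (hi : 1 ≤ i) (ha : 1 ≤ a) (hn : i + a + 2 ≤ n) :
    arrTgt n i a (i + a + 1) y - arrTgt n i a y (i + a + 1)
      = if y = i + a ∨ y = i + a + 2 then 1 else if y = i then -1 else 0 := by
  unfold arrTgt; split_ifs <;> omega

lemma succ_k_fst (n i a y : ℕ) (hi : 1 ≤ i) (ha : 1 ≤ a) (hn : i + a + 2 ≤ n) :
    arrTgt n i (a + 1) (i + a + 1) y = if y = i then 1 else 0 := by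
  unfold arrTgt; split_ifs <;> omega

lemma succ_k_snd (n i a y : ℕ) (hi : 1 ≤ i) (ha : 1 ≤ a) (hn : i + a + 2 ≤ n) :
    arrTgt n i (a + 1) y (i + a + 1) = if y = i + a ∨ y = i + a + 2 then 1 else 0 := by
  unfold arrTgt; split_ifs <;> omega

lemma succ_xy (n i a x y : ℕ) (hi : 1 ≤ i) (ha : 1 ≤ a) (hn : i + a + 2 ≤ n)
    (hx : x ≠ i + a + 1) (hy : y ≠ i + a + 1) :
    arrTgt n i (a + 1) x y = arrTgt n i a x y
      + (if x = i ∧ y = i + a + 2 then 1 else 0)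
      - (if x = i + a ∧ y = i then 1 else 0) := by
  unfold arrTgt; split_ifs <;> omega

lemma mutQ_left {V : Type*} [DecidableEq V] (B : V → V → ℤ) (k y : V) :
    mutQ B k k y = -B k y := by simp [mutQ]

lemma mutQ_right {V : Type*} [DecidableEq V] (B : V → V → ℤ) (k x : V) :
    mutQ B k x k = -B x k := by simp [mutQ]

lemma mutQ_else {V : Type*} [DecidableEq V] (B : V → V → ℤ) (k x y : V)
    (hx : x ≠ k) (hy : y ≠ k) :
    mutQ B k x y = B x y + Int.sign (B x k) * max (B x k * B k y) 0 := by
  simp [mutQ, hx, hy]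

set_option maxHeartbeats 2000000 in
lemma mut_base (n i : ℕ) (hi : 1 ≤ i) (hn : i + 2 ≤ n) (x y : ℕ) :
    mutQ (linN n) (i + 1) x y = arrTgt n i 1 x y - arrTgt n i 1 y x := by
  simp only [mutQ]
  rw [signmax _ _ (lin_mem n x (i+1)) (lin_mem n (i+1) y)]
  simp only [linN, arrTgt]
  split_ifs <;> first | omega | (exact absurd ‹_ ∧ _› (by tauto))

set_option maxHeartbeats 2000000 in
lemma mut_step (n i a : ℕ) (hi : 1 ≤ i) (ha : 1 ≤ a) (hn : i + a + 2 ≤ n) (x y : ℕ) :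
    mutQ (fun x y => arrTgt n i a x y - arrTgt n i a y x) (i + a + 1) x y
      = arrTgt n i (a + 1) x y - arrTgt n i (a + 1) y x := by
  by_cases hx : x = i + a + 1
  · subst hx
    rw [mutQ_left, succ_k_fst n i a y hi ha hn, succ_k_snd n i a y hi ha hn,
      vval n i a y hi ha hn]
    split_ifs <;> omega
  · by_cases hy : y = i + a + 1
    · subst hy
      rw [mutQ_right, succ_k_fst n i a x hi ha hn, succ_k_snd n i a x hi ha hn,
        uval n i a x hi ha hn]
      split_ifs <;> omega
    · rw [mutQ_else _ _ _ _ hx hy,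
        signmax _ _ (tgt_mem n i a x (i+a+1)) (tgt_mem n i a (i+a+1) y),
        uval n i a x hi ha hn, vval n i a y hi ha hn,
        succ_xy n i a x y hi ha hn hx hy, succ_xy n i a y x hi ha hn hy hx]
      set p := arrTgt n i a x y
      set q := arrTgt n i a y x
      split_ifs <;> first | omega | (exact absurd ‹_ ∧ _› (by tauto))

lemma mut_main (n i : ℕ) (hi : 1 ≤ i) : ∀ a, 1 ≤ a → i + a + 1 ≤ n →
    mutSeq (linN n) ((List.range a).map (fun t => i + 1 + t))
      = fun x y => arrTgt n i a x y - arrTgt n i a y x := by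
  intro a
  induction a with
  | zero => intro h; omega
  | succ a ih =>
    intro _ hn
    rcases Nat.eq_zero_or_pos a with h | h
    · subst h
      funext x y
      have : mutSeq (linN n) ((List.range 1).map (fun t => i + 1 + t))
          = mutQ (linN n) (i + 1) := by
        simp [mutSeq, List.range_succ]
      rw [this]
      exact mut_base n i hi (by omega) x y
    · funext x y
      rw [List.range_succ, List.map_append]
      have hfold : mutSeq (linN n) (((List.range a).map (fun t => i + 1 + t))
            ++ [i + 1 + a])
          = mutQ (mutSeq (linN n) ((List.range a).map (fun t => i + 1 + t))) (i + 1 + a) := by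
        simp [mutSeq, List.foldl_append]
      simp only [List.map_cons, List.map_nil]
      rw [hfold, ih h (by omega)]
      have hk : i + 1 + a = i + a + 1 := by omega
      rw [hk]
      exact mut_step n i a hi h (by omega) x y

/-- Mutating the linearly oriented quiver `1 → ⋯ → n` consecutively at the vertices
`i+1, i+2, …, i+a` yields exactly the quiver with arrows `j → j+1` for
`1 ≤ j ≤ i−1`, `i+1 ≤ j ≤ i+a−1` and `i+a+1 ≤ j ≤ n−1`, together with the oriented
3-cycle `i → i+a+1`, `i+a+1 → i+a`, `i+a → i`. -/
theorem mutSeq_lin_eq_one_triangle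
    (n i a : ℕ) (hn : 3 ≤ n) (hi : 1 ≤ i) (ha : 1 ≤ a) (hia : i + a + 1 ≤ n) :
    ∀ x y, 1 ≤ x → x ≤ n → 1 ≤ y → y ≤ n →
      mutSeq (linN n) ((List.range a).map (fun t => i + 1 + t)) x y
        = arrTgt n i a x y - arrTgt n i a y x := by
  intro x y _ _ _ _
  rw [mut_main n i hi a ha hia]
end

section
/- Let n ≥ 4 and let N_n be any quiver on {1, …, n} whose underlying unoriented graph is the n-cycle with edges {j, j+1} for 1 ≤ j ≤ n−1 and {n, 1}. Then in the root system of type D_n the set {α_1, …, α_{n−1}, β_n} with β_n = α_1 + α_2 + ⋯ + α_{n−2} + α_n is a companion basis for N_n. -/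
open scoped BigOperators

/-- The root system of type `D_n` (`n ≥ 4`), realized in `ℝ^n` as
`{±e_i ± e_j : 1 ≤ i < j ≤ n}`. -/
def PhiD (n : ℕ) : Set (Fin n → ℝ) :=
  {v | ∃ i j : ℕ, 1 ≤ i ∧ i < j ∧ j ≤ n ∧
    (v = eVec n i - eVec n j ∨ v = eVec n i + eVec n j ∨
     v = eVec n j - eVec n i ∨ v = -(eVec n i) - eVec n j)}

/-- The simple roots of type `D_n` (1-based): `α_i = e_i − e_{i+1}` for
`1 ≤ i ≤ n−1` and `α_n = e_{n−1} + e_n`. -/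
def alD (n : ℕ) (i : ℕ) : Fin n → ℝ :=
  if i < n then eVec n i - eVec n (i + 1) else eVec n (n - 1) + eVec n n

/-- A companion basis for the quiver `B` with respect to the type `D_n` root system:
a family of roots forming a ℤ-basis of the root lattice `ℤΦ` whose pairwise inner
products match, in absolute value, the edge multiplicities of the quiver. -/
def IsCompanionBasisD {V : Type*} (n : ℕ) (B : V → V → ℤ)
    (γ : V → (Fin n → ℝ)) : Prop :=
  (∀ x, γ x ∈ PhiD n) ∧ LinearIndependent ℤ γ ∧
  Submodule.span ℤ (Set.range γ) = Submodule.span ℤ (PhiD n) ∧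
  ∀ x y, x ≠ y → |ip (γ x) (γ y)| = ((B x y).natAbs : ℝ)

/-- Cyclic adjacency on the (1-based) labels `1, …, n`: the edges `{j, j+1}` for
`1 ≤ j ≤ n−1` and the edge `{n, 1}` (vertices `x, y : Fin n` carry label `val + 1`). -/
def cycAdj (n : ℕ) (x y : Fin n) : Prop :=
  x.val + 1 = y.val ∨ y.val + 1 = x.val ∨
  (x.val + 1 = n ∧ y.val = 0) ∨ (y.val + 1 = n ∧ x.val = 0)

/- ===== auxiliary machinery ===== -/

/-- `ind n a` is the standard basis vector with a 1 in (0-based) position `a`. -/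
def ind (n a : ℕ) : Fin n → ℝ := fun k => if (k : ℕ) = a then 1 else 0

/-- The companion-basis family in simplified form. -/
def gam (n : ℕ) (v : Fin n) : Fin n → ℝ :=
  if (v : ℕ) + 1 = n then ind n 0 + ind n (n - 1)
  else ind n (v : ℕ) - ind n ((v : ℕ) + 1)

lemma eVec_eq_ind (n i : ℕ) (hi : 1 ≤ i) : eVec n i = ind n (i - 1) := by
  funext k
  show (if (k : ℕ) + 1 = i then (1:ℝ) else 0) = _
  by_cases h : (k : ℕ) = i - 1
  · rw [if_pos (by omega), ind, if_pos h]
  · rw [if_neg (by omega), ind, if_neg h]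

lemma ip_add_left {m : ℕ} (u v w : Fin m → ℝ) : ip (u + v) w = ip u w + ip v w := by
  simp [ip, add_mul, Finset.sum_add_distrib]

lemma ip_sub_left {m : ℕ} (u v w : Fin m → ℝ) : ip (u - v) w = ip u w - ip v w := by
  simp [ip, sub_mul, Finset.sum_sub_distrib]

lemma ip_add_right {m : ℕ} (u v w : Fin m → ℝ) : ip u (v + w) = ip u v + ip u w := by
  simp [ip, mul_add, Finset.sum_add_distrib]

lemma ip_sub_right {m : ℕ} (u v w : Fin m → ℝ) : ip u (v - w) = ip u v - ip u w := by
  simp [ip, mul_sub, Finset.sum_sub_distrib]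

lemma ip_ind (n a b : ℕ) (ha : a < n) :
    ip (ind n a) (ind n b) = if a = b then 1 else 0 := by
  show (∑ k : Fin n, ind n a k * ind n b k) = _
  rw [Finset.sum_eq_single (⟨a, ha⟩ : Fin n)]
  · show (if a = a then (1:ℝ) else 0) * (if a = b then (1:ℝ) else 0) = _
    rw [if_pos rfl, one_mul]
  · intro k _ hk
    have : (k : ℕ) ≠ a := fun h => hk (Fin.ext h)
    show (if (k:ℕ) = a then (1:ℝ) else 0) * _ = 0
    rw [if_neg this, zero_mul]
  · intro h; exact absurd (Finset.mem_univ _) h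

lemma sum_alD (n : ℕ) (hn : 4 ≤ n) :
    (∑ t ∈ Finset.Icc 1 (n - 2), alD n t) + alD n n = ind n 0 + ind n (n - 1) := by
  funext k
  have hk := k.isLt
  rw [Pi.add_apply, Pi.add_apply, Finset.sum_apply]
  have hs : ∀ t ∈ Finset.Icc 1 (n - 2), alD n t k
      = (if (k : ℕ) + 1 = t then (1:ℝ) else 0) - (if (k : ℕ) = t then (1:ℝ) else 0) := by
    intro t ht
    simp only [Finset.mem_Icc] at ht
    rw [alD, if_pos (by omega), Pi.sub_apply]
    show (if (k:ℕ)+1 = t then (1:ℝ) else 0) - (if (k:ℕ)+1 = t+1 then (1:ℝ) else 0) = _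
    rw [show (if (k:ℕ)+1 = t+1 then (1:ℝ) else 0) = (if (k:ℕ) = t then (1:ℝ) else 0) from by
      by_cases h : (k : ℕ) = t
      · rw [if_pos (by omega), if_pos h]
      · rw [if_neg (by omega), if_neg h]]
  rw [Finset.sum_congr rfl hs, Finset.sum_sub_distrib,
    Finset.sum_ite_eq (Finset.Icc 1 (n-2)) ((k:ℕ)+1) (fun _ => (1:ℝ)),
    Finset.sum_ite_eq (Finset.Icc 1 (n-2)) ((k:ℕ)) (fun _ => (1:ℝ))]
  rw [alD, if_neg (lt_irrefl n), Pi.add_apply]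
  show _ - _ + ((if (k:ℕ)+1 = n-1 then (1:ℝ) else 0) + (if (k:ℕ)+1 = n then (1:ℝ) else 0))
      = (if (k:ℕ) = 0 then (1:ℝ) else 0) + (if (k:ℕ) = n-1 then (1:ℝ) else 0)
  simp only [Finset.mem_Icc]
  split_ifs <;> first | (exfalso; first | assumption | omega) | norm_num

lemma gam_nonspecial (n : ℕ) (v : Fin n) (h : (v : ℕ) + 1 ≠ n) :
    gam n v = eVec n ((v : ℕ) + 1) - eVec n ((v : ℕ) + 2) := by
  rw [gam, if_neg h, eVec_eq_ind n _ (by omega), eVec_eq_ind n _ (by omega),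
    show (v : ℕ) + 1 - 1 = (v : ℕ) from by omega, show (v : ℕ) + 2 - 1 = (v : ℕ) + 1 from by omega]

lemma gam_special (n : ℕ) (hn : 1 ≤ n) (v : Fin n) (h : (v : ℕ) + 1 = n) :
    gam n v = eVec n 1 + eVec n n := by
  rw [gam, if_pos h, eVec_eq_ind n 1 le_rfl, eVec_eq_ind n n hn]

lemma gam_memPhi (n : ℕ) (hn : 4 ≤ n) (v : Fin n) : gam n v ∈ PhiD n := by
  have hv := v.isLt
  by_cases h : (v : ℕ) + 1 = n
  · exact ⟨1, n, le_rfl, by omega, le_rfl, Or.inr (Or.inl (gam_special n (by omega) v h))⟩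
  · exact ⟨(v : ℕ) + 1, (v : ℕ) + 2, by omega, by omega, by omega,
      Or.inl (gam_nonspecial n v h)⟩

lemma diff_mem (n : ℕ) (i j : ℕ) (hi : 1 ≤ i) (hij : i ≤ j) (hj : j ≤ n) :
    eVec n i - eVec n j ∈ Submodule.span ℤ (Set.range (gam n)) := by
  induction j, hij using Nat.le_induction with
  | base => rw [sub_self]; exact zero_mem _
  | succ j hij ih =>
    have h1 : eVec n i - eVec n (j+1)
        = (eVec n i - eVec n j) + (eVec n j - eVec n (j+1)) := by abel
    rw [h1]
    refine add_mem (ih (by omega)) ?_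
    have hg : gam n ⟨j - 1, by omega⟩ = eVec n j - eVec n (j+1) := by
      rw [gam_nonspecial n _ (by show j - 1 + 1 ≠ n; omega)]
      rw [show (((⟨j - 1, by omega⟩ : Fin n) : ℕ)) = j - 1 from rfl,
        show j - 1 + 1 = j by omega, show j - 1 + 2 = j + 1 by omega]
    rw [← hg]
    exact Submodule.subset_span ⟨_, rfl⟩

lemma plus_mem (n : ℕ) (hn : 4 ≤ n) (i j : ℕ) (hi : 1 ≤ i) (hin : i ≤ n)
    (hj : 1 ≤ j) (hjn : j ≤ n) :
    eVec n i + eVec n j ∈ Submodule.span ℤ (Set.range (gam n)) := by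
  have h0 : eVec n 1 + eVec n n ∈ Submodule.span ℤ (Set.range (gam n)) := by
    rw [← gam_special n (by omega) ⟨n - 1, by omega⟩ (by show n - 1 + 1 = n; omega)]
    exact Submodule.subset_span ⟨_, rfl⟩
  have h1 := diff_mem n 1 i le_rfl hi hin
  have h2 := diff_mem n j n hj hjn le_rfl
  have key : eVec n i + eVec n j
      = (eVec n 1 + eVec n n) - (eVec n 1 - eVec n i) + (eVec n j - eVec n n) := by abel
  rw [key]
  exact add_mem (sub_mem h0 h1) h2

lemma span_eq_spanPhi (n : ℕ) (hn : 4 ≤ n) :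
    Submodule.span ℤ (Set.range (gam n)) = Submodule.span ℤ (PhiD n) := by
  apply le_antisymm
  · exact Submodule.span_mono (by rintro _ ⟨v, rfl⟩; exact gam_memPhi n hn v)
  · rw [Submodule.span_le]
    rintro v ⟨i, j, h1, h2, h3, (rfl | rfl | rfl | rfl)⟩
    · exact diff_mem n i j h1 (by omega) h3
    · exact plus_mem n hn i j h1 (by omega) (by omega) h3
    · rw [show eVec n j - eVec n i = -(eVec n i - eVec n j) by abel]
      exact neg_mem (diff_mem n i j h1 (by omega) h3)
    · rw [show -(eVec n i) - eVec n j = -(eVec n i + eVec n j) by abel]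
      exact neg_mem (plus_mem n hn i j h1 (by omega) (by omega) h3)

lemma spanR_top (n : ℕ) (hn : 4 ≤ n) :
    ⊤ ≤ Submodule.span ℝ (Set.range (gam n)) := by
  have hsub : ∀ x : Fin n → ℝ, x ∈ Submodule.span ℤ (Set.range (gam n)) →
      x ∈ Submodule.span ℝ (Set.range (gam n)) := fun x hx =>
    Submodule.span_subset_span ℤ ℝ _ hx
  have hsingle : ∀ c : ℕ, c < n → ind n c ∈ Submodule.span ℝ (Set.range (gam n)) := by
    intro c hc
    have h0 : eVec n 1 + eVec n n ∈ Submodule.span ℝ (Set.range (gam n)) := by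
      refine hsub _ ?_
      rw [← gam_special n (by omega) ⟨n - 1, by omega⟩ (by show n - 1 + 1 = n; omega)]
      exact Submodule.subset_span ⟨_, rfl⟩
    have h1 := hsub _ (diff_mem n 1 (c+1) le_rfl (by omega) (by omega))
    have h2 := hsub _ (diff_mem n (c+1) n (by omega) (by omega) le_rfl)
    have key : ind n c = (2⁻¹ : ℝ) •
        ((eVec n 1 + eVec n n) - (eVec n 1 - eVec n (c+1)) + (eVec n (c+1) - eVec n n)) := by
      rw [eVec_eq_ind n (c+1) (by omega), show c + 1 - 1 = c from rfl]
      module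
    rw [key]
    exact Submodule.smul_mem _ _ (add_mem (sub_mem h0 h1) h2)
  intro x _
  have hx : x ∈ Submodule.span ℝ (Set.range (Pi.basisFun ℝ (Fin n))) := by
    rw [(Pi.basisFun ℝ (Fin n)).span_eq]; trivial
  refine Submodule.span_le.mpr ?_ hx
  rintro _ ⟨i, rfl⟩
  have : (Pi.basisFun ℝ (Fin n)) i = ind n (i : ℕ) := by
    funext k
    rw [Pi.basisFun_apply, Pi.single_apply, ind]
    by_cases h : k = i
    · rw [if_pos h, if_pos (by rw [h])]
    · rw [if_neg h, if_neg (fun hh => h (Fin.ext hh))]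
  rw [this]
  exact hsingle i i.isLt

lemma gam_li (n : ℕ) (hn : 4 ≤ n) : LinearIndependent ℤ (gam n) := by
  have liR : LinearIndependent ℝ (gam n) :=
    linearIndependent_of_top_le_span_of_card_eq_finrank (spanR_top n hn) (by simp)
  refine liR.restrict_scalars ?_
  intro a b hab
  have : (a : ℝ) = (b : ℝ) := by simpa [zsmul_eq_mul] using hab
  exact_mod_cast this

lemma abs_ip_adj (n : ℕ) (hn : 4 ≤ n) (x y : Fin n) (hxy : x ≠ y) (h : cycAdj n x y) :
    |ip (gam n x) (gam n y)| = 1 := by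
  have hvx := x.isLt; have hvy := y.isLt
  have hne : (x : ℕ) ≠ (y : ℕ) := fun hh => hxy (Fin.ext hh)
  unfold cycAdj at h
  by_cases hx : (x : ℕ) + 1 = n <;> by_cases hy : (y : ℕ) + 1 = n
  · exact absurd (Fin.ext (by omega : (x:ℕ) = (y:ℕ))) hxy
  · rw [gam, if_pos hx, gam, if_neg hy, ip_add_left, ip_sub_right, ip_sub_right,
      ip_ind n 0 _ (by omega), ip_ind n 0 _ (by omega),
      ip_ind n (n-1) _ (by omega), ip_ind n (n-1) _ (by omega)]
    split_ifs <;> first | (exfalso; first | assumption | omega) | norm_num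
  · rw [gam, if_neg hx, gam, if_pos hy, ip_sub_left, ip_add_right, ip_add_right,
      ip_ind n _ 0 (by omega), ip_ind n _ (n-1) (by omega),
      ip_ind n _ 0 (by omega), ip_ind n _ (n-1) (by omega)]
    split_ifs <;> first | (exfalso; first | assumption | omega) | norm_num
  · rw [gam, if_neg hx, gam, if_neg hy, ip_sub_left, ip_sub_right, ip_sub_right,
      ip_ind n _ _ (by omega), ip_ind n _ _ (by omega),
      ip_ind n _ _ (by omega), ip_ind n _ _ (by omega)]
    split_ifs <;> first | (exfalso; first | assumption | omega) | norm_num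

lemma abs_ip_nonadj (n : ℕ) (hn : 4 ≤ n) (x y : Fin n) (hxy : x ≠ y) (h : ¬ cycAdj n x y) :
    |ip (gam n x) (gam n y)| = 0 := by
  have hvx := x.isLt; have hvy := y.isLt
  have hne : (x : ℕ) ≠ (y : ℕ) := fun hh => hxy (Fin.ext hh)
  unfold cycAdj at h
  by_cases hx : (x : ℕ) + 1 = n <;> by_cases hy : (y : ℕ) + 1 = n
  · exact absurd (Fin.ext (by omega : (x:ℕ) = (y:ℕ))) hxy
  · rw [gam, if_pos hx, gam, if_neg hy, ip_add_left, ip_sub_right, ip_sub_right,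
      ip_ind n 0 _ (by omega), ip_ind n 0 _ (by omega),
      ip_ind n (n-1) _ (by omega), ip_ind n (n-1) _ (by omega)]
    split_ifs <;> first | (exfalso; first | assumption | omega) | norm_num
  · rw [gam, if_neg hx, gam, if_pos hy, ip_sub_left, ip_add_right, ip_add_right,
      ip_ind n _ 0 (by omega), ip_ind n _ (n-1) (by omega),
      ip_ind n _ 0 (by omega), ip_ind n _ (n-1) (by omega)]
    split_ifs <;> first | (exfalso; first | assumption | omega) | norm_num
  · rw [gam, if_neg hx, gam, if_neg hy, ip_sub_left, ip_sub_right, ip_sub_right,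
      ip_ind n _ _ (by omega), ip_ind n _ _ (by omega),
      ip_ind n _ _ (by omega), ip_ind n _ _ (by omega)]
    split_ifs <;> first | (exfalso; first | assumption | omega) | norm_num


/-- For any quiver `N` on `{1, …, n}` (`n ≥ 4`) whose underlying unoriented graph is
the `n`-cycle, the set `{α_1, …, α_{n−1}, β_n}` with
`β_n = α_1 + ⋯ + α_{n−2} + α_n` is a companion basis for `N` in the root system of
type `D_n`. -/
theorem companionBasis_cycle_typeD (n : ℕ) (hn : 4 ≤ n)
    (B : Fin n → Fin n → ℤ) (hskew : ∀ x y, B y x = -B x y)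
    (hedge : ∀ x y : Fin n,
      (cycAdj n x y → (B x y).natAbs = 1) ∧ (¬cycAdj n x y → B x y = 0)) :
    IsCompanionBasisD n B
      (fun v => if v.val + 1 = n
        then (∑ t ∈ Finset.Icc 1 (n - 2), alD n t) + alD n n
        else alD n (v.val + 1)) := by
  have hgam : (fun v : Fin n => if v.val + 1 = n
      then (∑ t ∈ Finset.Icc 1 (n - 2), alD n t) + alD n n
      else alD n (v.val + 1)) = gam n := by
    funext v
    have hv := v.isLt
    by_cases h : (v : ℕ) + 1 = n
    · rw [if_pos h, sum_alD n hn, gam, if_pos h]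
    · rw [if_neg h, gam, if_neg h, alD, if_pos (by omega),
        eVec_eq_ind n _ (by omega), eVec_eq_ind n _ (by omega),
        show (v : ℕ) + 1 - 1 = (v : ℕ) from by omega,
        show (v : ℕ) + 1 + 1 - 1 = (v : ℕ) + 1 from by omega]
  rw [hgam]
  refine ⟨gam_memPhi n hn, gam_li n hn, span_eq_spanPhi n hn, ?_⟩
  intro x y hxy
  by_cases hadj : cycAdj n x y
  · rw [(hedge x y).1 hadj, Nat.cast_one]
    exact abs_ip_adj n hn x y hxy hadj
  · rw [(hedge x y).2 hadj]
    simpa using abs_ip_nonadj n hn x y hxy hadj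
end
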